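/- arXiv:1908.01267 — 5 statements merged into one kernel-verified Lean document; each statement's English description precedes it below -/
import Mathlib

section
/- Let M ∈ 𝒜(s,t) and let D ⊆ M be a partial matrix. If the rows and columns of M∖D can be permuted to be in good form, then D is a defining set for M. (One direction of the Cavenagh–Ramadurai characterization.) -/
open Finset

/-- Number of ones in row `i` of a binary matrix. -/
def rowSum {m n : ℕ} (M : Fin m → Fin n → Bool) (i : Fin m) : ℕ :=
  (Finset.univ.filter fun j => M i j = true).card

/-- Number of ones in column `j` of a binary matrix. -/
def colSum {m n : ℕ} (M : Fin m → Fin n → Bool) (j : Fin n) : ℕ :=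
  (Finset.univ.filter fun i => M i j = true).card

/-- `M` belongs to the class `𝒜(s,t)` of binary matrices with row sums `s` and column sums `t`. -/
def inClass {m n : ℕ} (s : Fin m → ℕ) (t : Fin n → ℕ) (M : Fin m → Fin n → Bool) : Prop :=
  (∀ i, rowSum M i = s i) ∧ (∀ j, colSum M j = t j)

/-- `D ⊆ M` : every filled cell of the partial matrix `D` agrees with `M`. -/
def containedIn {m n : ℕ} (D : Fin m → Fin n → Option Bool) (M : Fin m → Fin n → Bool) : Prop :=
  ∀ i j b, D i j = some b → M i j = b

/-- `D` is a defining set for `M` within the class `𝒜(s,t)`. -/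
def IsDefiningSet {m n : ℕ} (s : Fin m → ℕ) (t : Fin n → ℕ)
    (D : Fin m → Fin n → Option Bool) (M : Fin m → Fin n → Bool) : Prop :=
  inClass s t M ∧ containedIn D M ∧
    ∀ M', inClass s t M' → containedIn D M' → M' = M

/-- The size of a partial matrix: the number of filled cells. -/
def psize {m n : ℕ} (D : Fin m → Fin n → Option Bool) : ℕ :=
  (Finset.univ.filter fun p : Fin m × Fin n => (D p.1 p.2).isSome).card

/-- Total number of ones of a binary matrix. -/
def onesCount {m n : ℕ} (M : Fin m → Fin n → Bool) : ℕ :=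
  (Finset.univ.filter fun p : Fin m × Fin n => M p.1 p.2 = true).card

/-- `M ∖ D` : the partial matrix retaining exactly the entries of `M` not filled in `D`. -/
def matMinus {m n : ℕ} (M : Fin m → Fin n → Bool) (D : Fin m → Fin n → Option Bool) :
    Fin m → Fin n → Option Bool :=
  fun i j => if (D i j).isSome then none else some (M i j)

/-- A partial binary matrix is in good form if whenever it has a one at `(i,j)` and a zero
at `(i,j')` then `j < j'`, and whenever it has a zero at `(i,j)` and a one at `(i',j)`
then `i < i'`. -/
def GoodForm {m n : ℕ} (P : Fin m → Fin n → Option Bool) : Prop :=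
  (∀ i j j', P i j = some true → P i j' = some false → j < j') ∧
  (∀ i i' j, P i j = some false → P i' j = some true → i < i')

lemma card_filter_equiv' {n : ℕ} (τ : Equiv.Perm (Fin n)) (p : Fin n → Bool) :
    ((univ : Finset (Fin n)).filter fun j => p (τ j) = true).card
      = (univ.filter fun j => p j = true).card := by
  apply Finset.card_bij (fun a _ => τ a)
  · intro a ha; simp only [mem_filter, mem_univ, true_and] at ha ⊢; exact ha
  · intro a _ b _ hab; exact τ.injective hab
  · intro b hb
    refine ⟨τ.symm b, ?_, by simp⟩
    simp only [mem_filter, mem_univ, true_and] at hb ⊢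
    simpa using hb

lemma count_swap' {α : Type*} [Fintype α] [DecidableEq α] (f g : α → Bool)
    (h : ((univ : Finset α).filter fun x => f x = true).card
        = (univ.filter fun x => g x = true).card) :
    (univ.filter fun x => f x = true ∧ g x = false).card
      = (univ.filter fun x => f x = false ∧ g x = true).card := by
  have h1 := Finset.card_filter_add_card_filter_not
    (s := (univ : Finset α).filter fun x => f x = true) (p := fun x => g x = true)
  have h2 := Finset.card_filter_add_card_filter_not
    (s := (univ : Finset α).filter fun x => g x = true) (p := fun x => f x = true)
  simp only [Finset.filter_filter, Bool.not_eq_true] at h1 h2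
  have e1 : ((univ : Finset α).filter fun x => g x = true ∧ f x = true)
      = univ.filter fun x => f x = true ∧ g x = true := by
    apply Finset.filter_congr; intro x _; tauto
  have e2 : ((univ : Finset α).filter fun x => g x = true ∧ f x = false)
      = univ.filter fun x => f x = false ∧ g x = true := by
    apply Finset.filter_congr; intro x _; tauto
  rw [e1, e2] at h2
  omega

/-- If the rows and columns of `M ∖ D` can be permuted into good form,
then `D` is a defining set for `M`. -/
theorem goodForm_implies_defining {m n : ℕ} (s : Fin m → ℕ) (t : Fin n → ℕ)
    (M : Fin m → Fin n → Bool) (D : Fin m → Fin n → Option Bool)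
    (hM : inClass s t M) (hDM : containedIn D M)
    (h : ∃ (σ : Equiv.Perm (Fin m)) (τ : Equiv.Perm (Fin n)),
      GoodForm (fun i j => matMinus M D (σ i) (τ j))) :
    IsDefiningSet s t D M := by
  obtain ⟨σ, τ, hPr, hPc⟩ := h
  refine ⟨hM, hDM, ?_⟩
  intro M' hM' hDM'
  set A : Fin m → Fin n → Bool := fun i j => M (σ i) (τ j) with hA
  set B : Fin m → Fin n → Bool := fun i j => M' (σ i) (τ j) with hB
  have hPval : ∀ i j, A i j ≠ B i j → matMinus M D (σ i) (τ j) = some (A i j) := by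
    intro i j hne
    cases hD : D (σ i) (τ j) with
    | none => simp [matMinus, hD, hA]
    | some b =>
        exact absurd (by simp only [hA, hB, hDM _ _ _ hD, hDM' _ _ _ hD]) hne
  have hrow : ∀ i, ((univ : Finset (Fin n)).filter fun j => A i j = true).card
      = (univ.filter fun j => B i j = true).card := by
    intro i
    have e1 := card_filter_equiv' τ (M (σ i))
    have e2 := card_filter_equiv' τ (M' (σ i))
    have r1 := hM.1 (σ i)
    have r2 := hM'.1 (σ i)
    unfold rowSum at r1 r2
    simp only [hA, hB]
    omega
  have hcol : ∀ j, ((univ : Finset (Fin m)).filter fun i => A i j = true).card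
      = (univ.filter fun i => B i j = true).card := by
    intro j
    have e1 := card_filter_equiv' σ (fun i => M i (τ j))
    have e2 := card_filter_equiv' σ (fun i => M' i (τ j))
    have r1 := hM.2 (τ j)
    have r2 := hM'.2 (τ j)
    unfold colSum at r1 r2
    simp only [hA, hB]
    omega
  by_contra hne
  have hDisNe : (univ.filter fun p : Fin m × Fin n => A p.1 p.2 ≠ B p.1 p.2).Nonempty := by
    have : ∃ i j, M' i j ≠ M i j := by
      by_contra hc
      push_neg at hc
      exact hne (funext fun i => funext fun j => hc i j)
    obtain ⟨i, j, hij⟩ := this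
    refine ⟨(σ.symm i, τ.symm j), ?_⟩
    simp only [mem_filter, mem_univ, true_and, hA, hB, Equiv.apply_symm_apply]
    exact fun hc => hij hc.symm
  set Dis := univ.filter fun p : Fin m × Fin n => A p.1 p.2 ≠ B p.1 p.2 with hDis
  have hImNe : (Dis.image Prod.fst).Nonempty := hDisNe.image _
  set i₀ := (Dis.image Prod.fst).min' hImNe with hi₀
  have hi₀min : ∀ p ∈ Dis, i₀ ≤ p.1 := by
    intro p hp
    exact Finset.min'_le _ _ (Finset.mem_image_of_mem _ hp)
  obtain ⟨p₀, hp₀, hp₀fst⟩ := Finset.mem_image.mp (Finset.min'_mem _ hImNe)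
  -- row argument at i₀
  have hswapR := count_swap' (A i₀) (B i₀) (hrow i₀)
  have hD1ne : ((univ : Finset (Fin n)).filter fun j => A i₀ j = true ∧ B i₀ j = false).Nonempty := by
    have hp₀mem : A i₀ p₀.2 ≠ B i₀ p₀.2 := by
      have := (Finset.mem_filter.mp hp₀).2
      rwa [hp₀fst] at this
    cases hA0 : A i₀ p₀.2 <;> cases hB0 : B i₀ p₀.2
    · exact absurd (hA0.trans hB0.symm) hp₀mem
    · have : ((univ : Finset (Fin n)).filter fun j => A i₀ j = false ∧ B i₀ j = true).Nonempty :=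
        ⟨p₀.2, Finset.mem_filter.mpr ⟨Finset.mem_univ _, hA0, hB0⟩⟩
      rw [← Finset.card_pos] at this ⊢
      omega
    · exact ⟨p₀.2, Finset.mem_filter.mpr ⟨Finset.mem_univ _, hA0, hB0⟩⟩
    · exact absurd (hA0.trans hB0.symm) hp₀mem
  obtain ⟨j₁, hj₁⟩ := hD1ne
  obtain ⟨hAj₁, hBj₁⟩ := (Finset.mem_filter.mp hj₁).2
  -- column argument at j₁
  have hswapC : ((univ : Finset (Fin m)).filter fun i => A i j₁ = true ∧ B i j₁ = false).card
      = (univ.filter fun i => A i j₁ = false ∧ B i j₁ = true).card :=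
    count_swap' (fun i => A i j₁) (fun i => B i j₁) (hcol j₁)
  have hC2ne : ((univ : Finset (Fin m)).filter fun i => A i j₁ = false ∧ B i j₁ = true).Nonempty := by
    have : ((univ : Finset (Fin m)).filter fun i => A i j₁ = true ∧ B i j₁ = false).Nonempty :=
      ⟨i₀, Finset.mem_filter.mpr ⟨Finset.mem_univ _, hAj₁, hBj₁⟩⟩
    rw [← Finset.card_pos] at this ⊢
    omega
  obtain ⟨i₁, hi₁⟩ := hC2ne
  obtain ⟨hAi₁, hBi₁⟩ := (Finset.mem_filter.mp hi₁).2
  have hlt : i₁ < i₀ := by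
    have h1 : matMinus M D (σ i₁) (τ j₁) = some false := by
      have := hPval i₁ j₁ (by rw [hAi₁, hBi₁]; simp)
      rwa [hAi₁] at this
    have h2 : matMinus M D (σ i₀) (τ j₁) = some true := by
      have := hPval i₀ j₁ (by rw [hAj₁, hBj₁]; simp)
      rwa [hAj₁] at this
    exact hPc i₁ i₀ j₁ h1 h2
  have hge : i₀ ≤ i₁ := hi₀min (i₁, j₁) (Finset.mem_filter.mpr
    ⟨Finset.mem_univ _, by rw [hAi₁, hBi₁]; simp⟩)
  exact absurd hlt (not_lt.mpr hge)
end

section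
/- Let M ∈ 𝒜(s,t) and let D ⊆ M be a partial matrix. D is a defining set for M if and only if the rows and columns of M∖D can be permuted to be in good form. -/
open Finset

lemma matMinus_some {m n : ℕ} {M : Fin m → Fin n → Bool} {D : Fin m → Fin n → Option Bool}
    {i : Fin m} {j : Fin n} {b : Bool} :
    matMinus M D i j = some b ↔ D i j = none ∧ M i j = b := by
  unfold matMinus
  rcases h : D i j with _ | c <;> simp [h]

lemma card_exch {α : Type*} [DecidableEq α] {A B : Finset α} (h : A.card = B.card)
    {x : α} (hxA : x ∈ A) (hxB : x ∉ B) : ∃ y, y ∈ B ∧ y ∉ A := by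
  by_contra h'
  push_neg at h'
  have hsub : B ⊆ A := fun y hy => h' y hy
  have : B ⊂ A := ⟨hsub, fun hAB => hxB (hAB hxA)⟩
  exact absurd h (Nat.ne_of_gt (Finset.card_lt_card this))

lemma exists_sort_perm {N : ℕ} (Q : Fin N → Fin N → Prop)
    (h : Irreflexive (Relation.TransGen Q)) :
    ∃ π : Equiv.Perm (Fin N), ∀ a b, Q (π a) (π b) → a < b := by
  classical
  set w : Fin N → ℕ := fun x => (univ.filter fun p => Relation.TransGen Q p x).card with hw
  have hmono : ∀ x y, Q x y → w x < w y := by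
    intro x y hxy
    apply Finset.card_lt_card
    rw [Finset.ssubset_iff_of_subset]
    · exact ⟨x, by simp [Relation.TransGen.single hxy], by simp [fun hc => h x hc]⟩
    · intro p hp
      simp only [mem_filter, mem_univ, true_and] at *
      exact hp.tail hxy
  refine ⟨Tuple.sort w, fun a b hq => ?_⟩
  by_contra hle
  push_neg at hle
  exact absurd (hmono _ _ hq) (not_lt.2 (Tuple.monotone_sort w hle))

lemma diff_none {m n : ℕ} {M M' : Fin m → Fin n → Bool} {D : Fin m → Fin n → Option Bool}
    (hDM : containedIn D M) (hDM' : containedIn D M') {i : Fin m} {j : Fin n}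
    (h : M i j ≠ M' i j) : D i j = none := by
  rcases hD : D i j with _ | b
  · rfl
  · exact absurd ((hDM i j b hD).trans (hDM' i j b hD).symm) h

lemma unique_of_goodForm {m n : ℕ} {s : Fin m → ℕ} {t : Fin n → ℕ}
    {M M' : Fin m → Fin n → Bool} {D : Fin m → Fin n → Option Bool}
    (hM : inClass s t M) (hDM : containedIn D M)
    (σ : Equiv.Perm (Fin m)) (τ : Equiv.Perm (Fin n))
    (hg : GoodForm fun i j => matMinus M D (σ i) (τ j))
    (hM' : inClass s t M') (hDM' : containedIn D M') : M' = M := by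
  classical
  by_contra hne
  have hdiff : ∃ i j, M' i j ≠ M i j := by
    by_contra h
    push_neg at h
    exact hne (funext fun i => funext fun j => h i j)
  have hrowEq : ∀ i, (univ.filter fun j => M i j = true).card
      = (univ.filter fun j => M' i j = true).card :=
    fun i => (hM.1 i).trans (hM'.1 i).symm
  have hcolEq : ∀ j, (univ.filter fun i => M i j = true).card
      = (univ.filter fun i => M' i j = true).card :=
    fun j => (hM.2 j).trans (hM'.2 j).symm
  have hrowExch : ∀ i j, M i j = true → M' i j = false →
      ∃ j', M i j' = false ∧ M' i j' = true := by
    intro i j h1 h2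
    obtain ⟨y, hy1, hy2⟩ := card_exch (hrowEq i)
      (by simp [h1] : j ∈ univ.filter fun j' => M i j' = true)
      (by simp [h2] : j ∉ univ.filter fun j' => M' i j' = true)
    simp only [mem_filter, mem_univ, true_and] at hy1 hy2
    exact ⟨y, by simpa using hy2, hy1⟩
  have hcolExch : ∀ i j, M i j = true → M' i j = false →
      ∃ i', M i' j = false ∧ M' i' j = true := by
    intro i j h1 h2
    obtain ⟨y, hy1, hy2⟩ := card_exch (hcolEq j)
      (by simp [h1] : i ∈ univ.filter fun i' => M i' j = true)
      (by simp [h2] : i ∉ univ.filter fun i' => M' i' j = true)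
    simp only [mem_filter, mem_univ, true_and] at hy1 hy2
    exact ⟨y, by simpa using hy2, hy1⟩
  -- the set of "plus" cells in permuted coordinates
  set Plus : Finset (Fin m × Fin n) :=
    univ.filter fun p => M (σ p.1) (τ p.2) = false ∧ M' (σ p.1) (τ p.2) = true with hPlus
  have hstep : ∀ p ∈ Plus, ∃ q ∈ Plus, q.1 < p.1 ∧ q.2 < p.2 := by
    rintro ⟨i, j⟩ hp
    simp only [hPlus, mem_filter, mem_univ, true_and] at hp
    obtain ⟨hf, ht⟩ := hp
    have hPij : matMinus M D (σ i) (τ j) = some false :=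
      matMinus_some.mpr ⟨diff_none hDM hDM' (by simp [hf, ht]), hf⟩
    -- find a "minus" cell in the same row
    obtain ⟨y, hy1, hy2⟩ := card_exch (hrowEq (σ i)).symm
      (by simp [ht] : τ j ∈ univ.filter fun j' => M' (σ i) j' = true)
      (by simp [hf] : τ j ∉ univ.filter fun j' => M (σ i) j' = true)
    simp only [mem_filter, mem_univ, true_and] at hy1 hy2
    replace hy2 : M' (σ i) y = false := by simpa using hy2
    have hPy : matMinus M D (σ i) y = some true :=
      matMinus_some.mpr ⟨diff_none hDM hDM' (by simp [hy1, hy2]), hy1⟩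
    set j' := τ.symm y with hj'
    have hyj' : τ j' = y := τ.apply_symm_apply y
    have hjj : j' < j := hg.1 i j' j (by beta_reduce; rw [hyj']; exact hPy) hPij
    -- find a "plus" cell in column y
    obtain ⟨x, hx1, hx2⟩ := hcolExch (σ i) y hy1 hy2
    set i' := σ.symm x with hi'
    have hxi' : σ i' = x := σ.apply_symm_apply x
    have hPx : matMinus M D (σ i') (τ j') = some false :=
      matMinus_some.mpr ⟨by rw [hxi', hyj']; exact diff_none hDM hDM' (by simp [hx1, hx2]),
        by rw [hxi', hyj']; exact hx1⟩
    have hii : i' < i := hg.2 i' i j' hPx (by beta_reduce; rw [hyj']; exact hPy)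
    refine ⟨(i', j'), ?_, hii, hjj⟩
    simp only [hPlus, mem_filter, mem_univ, true_and]
    rw [hxi', hyj']
    exact ⟨hx1, hx2⟩
  have hne' : Plus.Nonempty := by
    obtain ⟨i0, j0, hd⟩ := hdiff
    rcases hMf : M i0 j0 with _ | _
    · refine ⟨(σ.symm i0, τ.symm j0), ?_⟩
      simp only [hPlus, mem_filter, mem_univ, true_and, σ.apply_symm_apply, τ.apply_symm_apply]
      refine ⟨hMf, ?_⟩
      rw [hMf] at hd
      simpa using Ne.symm hd
    · have hM'f : M' i0 j0 = false := by
        rw [hMf] at hd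
        simpa using Ne.symm hd
      obtain ⟨y, hy1, hy2⟩ := hrowExch i0 j0 hMf hM'f
      refine ⟨(σ.symm i0, τ.symm y), ?_⟩
      simp only [hPlus, mem_filter, mem_univ, true_and, σ.apply_symm_apply, τ.apply_symm_apply]
      exact ⟨hy1, hy2⟩
  obtain ⟨p, hpP, hpmin⟩ := Finset.exists_min_image Plus (fun p => p.1.val + p.2.val) hne'
  obtain ⟨q, hqP, hq1, hq2⟩ := hstep p hpP
  have : q.1.val + q.2.val < p.1.val + p.2.val := Nat.add_lt_add hq1 hq2
  exact absurd (hpmin q hqP) (not_le.2 this)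

lemma irrefl_col {m n : ℕ} {s : Fin m → ℕ} {t : Fin n → ℕ}
    {M : Fin m → Fin n → Bool} {D : Fin m → Fin n → Option Bool}
    (hM : inClass s t M) (hDM : containedIn D M)
    (huniq : ∀ M', inClass s t M' → containedIn D M' → M' = M) :
    Irreflexive (Relation.TransGen fun j j' : Fin n =>
      ∃ i, matMinus M D i j = some true ∧ matMinus M D i j' = some false) := by
  classical
  set R : Fin n → Fin n → Prop := fun j j' =>
    ∃ i, matMinus M D i j = some true ∧ matMinus M D i j' = some false with hRdef
  intro j0 htg
  -- extract a walk from a transitive chain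
  have hwalk : ∀ {a b : Fin n}, Relation.TransGen R a b →
      ∃ L, 0 < L ∧ ∃ c : ℕ → Fin n, c 0 = a ∧ c L = b ∧ ∀ k < L, R (c k) (c (k + 1)) := by
    intro a b h
    induction h with
    | @single b' h =>
      refine ⟨1, one_pos, fun k => if k = 0 then a else b', by simp, by simp, ?_⟩
      intro k hk
      interval_cases k
      simpa using h
    | @tail b' c' hab hbc ih =>
      obtain ⟨L, hL, f, hf0, hfL, hfstep⟩ := ih
      refine ⟨L + 1, by omega, fun k => if k ≤ L then f k else c', by simp [hf0], by simp, ?_⟩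
      intro k hk
      rcases Nat.lt_or_ge k L with h' | h'
      · simpa [Nat.le_of_lt h', Nat.succ_le_of_lt h'] using hfstep k h'
      · have hkL : k = L := by omega
        subst hkL
        simpa [hfL] using hbc
  obtain ⟨L0, hL0, c0, hc00, hc0L, hc0step⟩ := hwalk htg
  -- take a minimal-length cycle
  have hPred : ∃ q, ∃ c : ℕ → Fin n, c (q + 1) = c 0 ∧ ∀ k < q + 1, R (c k) (c (k + 1)) := by
    refine ⟨L0 - 1, c0, ?_, ?_⟩
    · rw [Nat.sub_add_cancel hL0, hc0L, hc00]
    · intro k hk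
      exact hc0step k (by omega)
  set q := Nat.find hPred with hq
  obtain ⟨c, hcL, hcstep⟩ := Nat.find_spec hPred
  set L := q + 1 with hLdef
  have hLpos : 0 < L := Nat.succ_pos q
  have hmin : ∀ L', 0 < L' → L' < L →
      ¬∃ c' : ℕ → Fin n, c' L' = c' 0 ∧ ∀ k < L', R (c' k) (c' (k + 1)) := by
    intro L' hL'pos hL'lt ⟨c', h1, h2⟩
    have := Nat.find_min hPred (m := L' - 1) (by omega)
    apply this
    refine ⟨c', ?_, ?_⟩
    · rwa [Nat.sub_add_cancel hL'pos]
    · intro k hk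
      exact h2 k (by omega)
  -- injectivity of c on [0, L)
  have cinj : ∀ a b, a < L → b < L → c a = c b → a = b := by
    have key : ∀ a b, a < b → b < L → c a ≠ c b := by
      intro a b hab hbL heq
      refine hmin (b - a) (by omega) (by omega) ⟨fun k => c (a + k), ?_, ?_⟩
      · show c (a + (b - a)) = c (a + 0)
        rw [Nat.add_sub_cancel' (le_of_lt hab), Nat.add_zero]
        exact heq.symm
      · intro k hk
        show R (c (a + k)) (c (a + (k + 1)))
        have := hcstep (a + k) (by omega)
        rwa [Nat.add_assoc] at this
    intro a b ha hb heq
    rcases lt_trichotomy a b with h | h | h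
    · exact absurd heq (key a b h hb)
    · exact h
    · exact absurd heq.symm (key b a h ha)
  have cwrap : ∀ k, k < L → c (k + 1) = c ((k + 1) % L) := by
    intro k hk
    rcases Nat.lt_or_ge (k + 1) L with h | h
    · rw [Nat.mod_eq_of_lt h]
    · have : k + 1 = L := by omega
      rw [this, Nat.mod_self, hcL]
  -- choose rows
  have hrowex : ∀ k, k < L → ∃ i, matMinus M D i (c k) = some true ∧
      matMinus M D i (c (k + 1)) = some false := fun k hk => hcstep k hk
  set r : ℕ → Fin m := fun k => if h : k < L then (hrowex k h).choose
    else (hrowex 0 hLpos).choose with hrdef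
  have hr : ∀ k, (h : k < L) → matMinus M D (r k) (c k) = some true ∧
      matMinus M D (r k) (c (k + 1)) = some false := by
    intro k h
    simp only [hrdef, dif_pos h]
    exact (hrowex k h).choose_spec
  have hMt : ∀ k, k < L → M (r k) (c k) = true := fun k h => (matMinus_some.mp (hr k h).1).2
  have hDt : ∀ k, k < L → D (r k) (c k) = none := fun k h => (matMinus_some.mp (hr k h).1).1
  have hMf : ∀ k, k < L → M (r k) (c (k + 1)) = false := fun k h => (matMinus_some.mp (hr k h).2).2
  have hDf : ∀ k, k < L → D (r k) (c (k + 1)) = none := fun k h => (matMinus_some.mp (hr k h).2).1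
  -- the alternative matrix
  set M' : Fin m → Fin n → Bool := fun i j =>
    if ∃ k, k < L ∧ i = r k ∧ j = c k then false
    else if ∃ k, k < L ∧ i = r k ∧ j = c (k + 1) then true
    else M i j with hM'def
  have hex : ∀ i j, (∃ k, k < L ∧ i = r k ∧ j = c k) →
      (∃ k, k < L ∧ i = r k ∧ j = c (k + 1)) → False := by
    rintro i j ⟨k, hk, rfl, rfl⟩ ⟨k', hk', hik, hjk⟩
    have h1 := hMt k hk
    have h2 := hMf k' hk'
    rw [← hik, ← hjk] at h2
    rw [h1] at h2
    exact Bool.noConfusion h2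
  have hM'eq : ∀ i j, ¬(∃ k, k < L ∧ i = r k ∧ j = c k) →
      ¬(∃ k, k < L ∧ i = r k ∧ j = c (k + 1)) → M' i j = M i j := by
    intro i j h1 h2
    simp only [hM'def, if_neg h1, if_neg h2]
  have hM'down : ∀ i j, (∃ k, k < L ∧ i = r k ∧ j = c k) → M' i j = false := by
    intro i j h1
    simp only [hM'def, if_pos h1]
  have hM'up : ∀ i j, (∃ k, k < L ∧ i = r k ∧ j = c (k + 1)) → M' i j = true := by
    intro i j h2
    simp only [hM'def, if_neg (fun h1 => hex i j h1 h2), if_pos h2]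
  have csuccinj : ∀ a b, a < L → b < L → c (a + 1) = c (b + 1) → a = b := by
    intro a b ha hb h
    have e1 : (a + 1) % L = (b + 1) % L :=
      cinj _ _ (Nat.mod_lt _ hLpos) (Nat.mod_lt _ hLpos) (by rw [← cwrap a ha, ← cwrap b hb, h])
    rcases Nat.lt_or_ge (a + 1) L with h1 | h1 <;> rcases Nat.lt_or_ge (b + 1) L with h2 | h2
    · rw [Nat.mod_eq_of_lt h1, Nat.mod_eq_of_lt h2] at e1; omega
    · have hb1 : b + 1 = L := by omega
      rw [Nat.mod_eq_of_lt h1, hb1, Nat.mod_self] at e1; omega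
    · have ha1 : a + 1 = L := by omega
      rw [Nat.mod_eq_of_lt h2, ha1, Nat.mod_self] at e1; omega
    · omega
  have hrowsum : ∀ i, rowSum M' i = rowSum M i := by
    intro i
    unfold rowSum
    set K : Finset ℕ := (Finset.range L).filter (fun k => r k = i) with hK
    set Dn : Finset (Fin n) := K.image (fun k => c k) with hDnd
    set Up : Finset (Fin n) := K.image (fun k => c (k + 1)) with hUpd
    set T : Finset (Fin n) := univ.filter (fun j => M i j = true) with hTd
    have hcond1 : ∀ j, (∃ k, k < L ∧ i = r k ∧ j = c k) ↔ j ∈ Dn := by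
      intro j
      simp only [hDnd, hK, Finset.mem_image, Finset.mem_filter, Finset.mem_range]
      constructor
      · rintro ⟨k, hk, h1, h2⟩; exact ⟨k, ⟨hk, h1.symm⟩, h2.symm⟩
      · rintro ⟨k, ⟨hk, h1⟩, h2⟩; exact ⟨k, hk, h1.symm, h2.symm⟩
    have hcond2 : ∀ j, (∃ k, k < L ∧ i = r k ∧ j = c (k + 1)) ↔ j ∈ Up := by
      intro j
      simp only [hUpd, hK, Finset.mem_image, Finset.mem_filter, Finset.mem_range]
      constructor
      · rintro ⟨k, hk, h1, h2⟩; exact ⟨k, ⟨hk, h1.symm⟩, h2.symm⟩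
      · rintro ⟨k, ⟨hk, h1⟩, h2⟩; exact ⟨k, hk, h1.symm, h2.symm⟩
    have hDnT : Dn ⊆ T := by
      intro j hj
      obtain ⟨k, hk, h1, h2⟩ := (hcond1 j).mpr hj
      simp only [hTd, mem_filter, mem_univ, true_and]
      rw [h1, h2]
      exact hMt k hk
    have hUpT : ∀ j ∈ Up, j ∉ T := by
      intro j hj hjT
      obtain ⟨k, hk, h1, h2⟩ := (hcond2 j).mpr hj
      simp only [hTd, mem_filter, mem_univ, true_and] at hjT
      rw [h1, h2, hMf k hk] at hjT
      exact Bool.noConfusion hjT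
    have hT' : (univ.filter fun j => M' i j = true) = (T \ Dn) ∪ Up := by
      ext j
      simp only [mem_filter, mem_univ, true_and, Finset.mem_union, Finset.mem_sdiff]
      constructor
      · intro hMj'
        by_cases h1 : ∃ k, k < L ∧ i = r k ∧ j = c k
        · rw [hM'down i j h1] at hMj'
          exact absurd hMj' (by simp)
        by_cases h2 : ∃ k, k < L ∧ i = r k ∧ j = c (k + 1)
        · exact Or.inr ((hcond2 j).mp h2)
        · refine Or.inl ⟨?_, fun hDnj => h1 ((hcond1 j).mpr hDnj)⟩
          simp only [hTd, mem_filter, mem_univ, true_and]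
          rw [← hM'eq i j h1 h2]
          exact hMj'
      · intro h
        rcases h with ⟨hjT, hjDn⟩ | hjUp
        · have h1 : ¬∃ k, k < L ∧ i = r k ∧ j = c k := fun hc => hjDn ((hcond1 j).mp hc)
          by_cases h2 : ∃ k, k < L ∧ i = r k ∧ j = c (k + 1)
          · exact hM'up i j h2
          · rw [hM'eq i j h1 h2]
            simpa [hTd] using hjT
        · exact hM'up i j ((hcond2 j).mpr hjUp)
    have hDncard : Dn.card = K.card := by
      rw [hDnd]
      apply Finset.card_image_of_injOn
      intro a ha b hb h
      simp only [hK, Finset.coe_filter, Finset.mem_range, Set.mem_setOf_eq] at ha hb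
      exact cinj a b ha.1 hb.1 h
    have hUpcard : Up.card = K.card := by
      rw [hUpd]
      apply Finset.card_image_of_injOn
      intro a ha b hb h
      simp only [hK, Finset.coe_filter, Finset.mem_range, Set.mem_setOf_eq] at ha hb
      exact csuccinj a b ha.1 hb.1 h
    have hdisj : Disjoint (T \ Dn) Up := by
      rw [Finset.disjoint_right]
      intro j hj hj2
      exact hUpT j hj (Finset.mem_sdiff.mp hj2).1
    have hle : K.card ≤ T.card := hDncard ▸ Finset.card_le_card hDnT
    rw [hT', Finset.card_union_of_disjoint hdisj, Finset.card_sdiff_of_subset hDnT, hDncard, hUpcard]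
    omega
  have hcolsum : ∀ j, colSum M' j = colSum M j := by
    intro j
    unfold colSum
    set K1 : Finset ℕ := (Finset.range L).filter (fun k => c k = j) with hK1
    set K2 : Finset ℕ := (Finset.range L).filter (fun k => c (k + 1) = j) with hK2
    set Dn : Finset (Fin m) := K1.image r with hDnd
    set Up : Finset (Fin m) := K2.image r with hUpd
    set T : Finset (Fin m) := univ.filter (fun i => M i j = true) with hTd
    have hcond1 : ∀ i, (∃ k, k < L ∧ i = r k ∧ j = c k) ↔ i ∈ Dn := by
      intro i
      simp only [hDnd, hK1, Finset.mem_image, Finset.mem_filter, Finset.mem_range]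
      constructor
      · rintro ⟨k, hk, h1, h2⟩; exact ⟨k, ⟨hk, h2.symm⟩, h1.symm⟩
      · rintro ⟨k, ⟨hk, h1⟩, h2⟩; exact ⟨k, hk, h2.symm, h1.symm⟩
    have hcond2 : ∀ i, (∃ k, k < L ∧ i = r k ∧ j = c (k + 1)) ↔ i ∈ Up := by
      intro i
      simp only [hUpd, hK2, Finset.mem_image, Finset.mem_filter, Finset.mem_range]
      constructor
      · rintro ⟨k, hk, h1, h2⟩; exact ⟨k, ⟨hk, h2.symm⟩, h1.symm⟩
      · rintro ⟨k, ⟨hk, h1⟩, h2⟩; exact ⟨k, hk, h2.symm, h1.symm⟩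
    have hDnT : Dn ⊆ T := by
      intro i hi
      obtain ⟨k, hk, h1, h2⟩ := (hcond1 i).mpr hi
      simp only [hTd, mem_filter, mem_univ, true_and]
      rw [h1, h2]
      exact hMt k hk
    have hUpT : ∀ i ∈ Up, i ∉ T := by
      intro i hi hiT
      obtain ⟨k, hk, h1, h2⟩ := (hcond2 i).mpr hi
      simp only [hTd, mem_filter, mem_univ, true_and] at hiT
      rw [h1, h2, hMf k hk] at hiT
      exact Bool.noConfusion hiT
    have hT' : (univ.filter fun i => M' i j = true) = (T \ Dn) ∪ Up := by
      ext i
      simp only [mem_filter, mem_univ, true_and, Finset.mem_union, Finset.mem_sdiff]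
      constructor
      · intro hMi'
        by_cases h1 : ∃ k, k < L ∧ i = r k ∧ j = c k
        · rw [hM'down i j h1] at hMi'
          exact absurd hMi' (by simp)
        by_cases h2 : ∃ k, k < L ∧ i = r k ∧ j = c (k + 1)
        · exact Or.inr ((hcond2 i).mp h2)
        · refine Or.inl ⟨?_, fun hDni => h1 ((hcond1 i).mpr hDni)⟩
          simp only [hTd, mem_filter, mem_univ, true_and]
          rw [← hM'eq i j h1 h2]
          exact hMi'
      · intro h
        rcases h with ⟨hiT, hiDn⟩ | hiUp
        · have h1 : ¬∃ k, k < L ∧ i = r k ∧ j = c k := fun hc => hiDn ((hcond1 i).mp hc)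
          by_cases h2 : ∃ k, k < L ∧ i = r k ∧ j = c (k + 1)
          · exact hM'up i j h2
          · rw [hM'eq i j h1 h2]
            simpa [hTd] using hiT
        · exact hM'up i j ((hcond2 i).mpr hiUp)
    have hK1uniq : ∀ a ∈ K1, ∀ b ∈ K1, a = b := by
      intro a ha b hb
      simp only [hK1, mem_filter, Finset.mem_range] at ha hb
      exact cinj a b ha.1 hb.1 (ha.2.trans hb.2.symm)
    have hK2uniq : ∀ a ∈ K2, ∀ b ∈ K2, a = b := by
      intro a ha b hb
      simp only [hK2, mem_filter, Finset.mem_range] at ha hb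
      exact csuccinj a b ha.1 hb.1 (ha.2.trans hb.2.symm)
    have hiff : K1.Nonempty ↔ K2.Nonempty := by
      constructor
      · rintro ⟨k, hk⟩
        simp only [hK1, mem_filter, Finset.mem_range] at hk
        rcases Nat.eq_zero_or_pos k with h0 | h0
        · refine ⟨L - 1, ?_⟩
          simp only [hK2, mem_filter, Finset.mem_range]
          refine ⟨by omega, ?_⟩
          rw [Nat.sub_add_cancel hLpos, hcL, ← h0]
          exact hk.2
        · refine ⟨k - 1, ?_⟩
          simp only [hK2, mem_filter, Finset.mem_range]
          refine ⟨by omega, ?_⟩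
          rw [Nat.sub_add_cancel h0]
          exact hk.2
      · rintro ⟨k, hk⟩
        simp only [hK2, mem_filter, Finset.mem_range] at hk
        rcases Nat.lt_or_ge (k + 1) L with h0 | h0
        · refine ⟨k + 1, ?_⟩
          simp only [hK1, mem_filter, Finset.mem_range]
          exact ⟨h0, hk.2⟩
        · refine ⟨0, ?_⟩
          simp only [hK1, mem_filter, Finset.mem_range]
          have hkk : k + 1 = L := by omega
          refine ⟨hLpos, ?_⟩
          rw [← hcL, ← hkk]
          exact hk.2
    have hcard12 : Dn.card = Up.card := by
      by_cases hne1 : K1.Nonempty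
      · obtain ⟨k1, hk1⟩ := hne1
        obtain ⟨k2, hk2⟩ := hiff.mp ⟨k1, hk1⟩
        have e1 : K1 = {k1} :=
          Finset.eq_singleton_iff_unique_mem.mpr ⟨hk1, fun x hx => hK1uniq x hx k1 hk1⟩
        have e2 : K2 = {k2} :=
          Finset.eq_singleton_iff_unique_mem.mpr ⟨hk2, fun x hx => hK2uniq x hx k2 hk2⟩
        rw [hDnd, hUpd, e1, e2]
        simp
      · have hne2 : ¬K2.Nonempty := fun h => hne1 (hiff.mpr h)
        rw [Finset.not_nonempty_iff_eq_empty] at hne1 hne2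
        rw [hDnd, hUpd, hne1, hne2]
    have hdisj : Disjoint (T \ Dn) Up := by
      rw [Finset.disjoint_right]
      intro i hi hi2
      exact hUpT i hi (Finset.mem_sdiff.mp hi2).1
    have hle : Dn.card ≤ T.card := Finset.card_le_card hDnT
    rw [hT', Finset.card_union_of_disjoint hdisj, Finset.card_sdiff_of_subset hDnT]
    omega
  have hcont : containedIn D M' := by
    intro i j b hb
    have h1 : ¬∃ k, k < L ∧ i = r k ∧ j = c k := by
      rintro ⟨k, hk, rfl, rfl⟩
      rw [hDt k hk] at hb
      exact Option.some_ne_none b hb.symm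
    have h2 : ¬∃ k, k < L ∧ i = r k ∧ j = c (k + 1) := by
      rintro ⟨k, hk, rfl, rfl⟩
      rw [hDf k hk] at hb
      exact Option.some_ne_none b hb.symm
    rw [hM'eq i j h1 h2]
    exact hDM i j b hb
  have hclass : inClass s t M' :=
    ⟨fun i => (hrowsum i).trans (hM.1 i), fun j => (hcolsum j).trans (hM.2 j)⟩
  have hMM := huniq M' hclass hcont
  have h0 : M' (r 0) (c 0) = false := hM'down _ _ ⟨0, hLpos, rfl, rfl⟩
  rw [hMM, hMt 0 hLpos] at h0
  exact Bool.noConfusion h0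

/-- Cavenagh–Ramadurai characterization: `D` is a defining set for `M` if and only if
the rows and columns of `M ∖ D` can be permuted into good form. -/
theorem defining_iff_goodForm {m n : ℕ} (s : Fin m → ℕ) (t : Fin n → ℕ)
    (M : Fin m → Fin n → Bool) (D : Fin m → Fin n → Option Bool)
    (hM : inClass s t M) (hDM : containedIn D M) :
    IsDefiningSet s t D M ↔
      ∃ (σ : Equiv.Perm (Fin m)) (τ : Equiv.Perm (Fin n)),
        GoodForm (fun i j => matMinus M D (σ i) (τ j)) := by
  constructor
  · rintro ⟨-, -, huniq⟩
    have hcol := irrefl_col hM hDM huniq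
    have huniqT : ∀ M'' : Fin n → Fin m → Bool, inClass t s M'' →
        containedIn (fun j i => D i j) M'' → M'' = fun j i => M i j := by
      intro M'' h1 h2
      have e := huniq (fun a b => M'' b a) ⟨h1.2, h1.1⟩ (fun a b bb hh => h2 b a bb hh)
      exact funext fun j => funext fun i => congrFun (congrFun e i) j
    have hrow' := irrefl_col (M := fun j i => M i j) (D := fun j i => D i j)
      ⟨hM.2, hM.1⟩ (fun j i b h => hDM i j b h) huniqT
    have hQirr : Irreflexive (Relation.TransGen fun a b : Fin m =>
        ∃ jj, matMinus M D a jj = some false ∧ matMinus M D b jj = some true) := by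
      intro a ha
      apply hrow' a
      have hswap : Relation.TransGen (fun x y : Fin m =>
          ∃ jj, matMinus (fun j i => M i j) (fun j i => D i j) jj y = some true ∧
            matMinus (fun j i => M i j) (fun j i => D i j) jj x = some false) a a :=
        Relation.TransGen.mono (fun x y ⟨jj, h1, h2⟩ => ⟨jj, h2, h1⟩) a a ha
      exact Relation.transGen_swap.mp hswap
    obtain ⟨σ, hσ⟩ := exists_sort_perm _ hQirr
    obtain ⟨τ, hτ⟩ := exists_sort_perm _ hcol
    exact ⟨σ, τ, fun i j j' h1 h2 => hτ j j' ⟨σ i, h1, h2⟩,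
      fun i i' j h1 h2 => hσ i i' ⟨τ j, h1, h2⟩⟩
  · rintro ⟨σ, τ, hg⟩
    exact ⟨hM, hDM, fun M' h1 h2 => unique_of_goodForm hM hDM σ τ hg h1 h2⟩
end

section
/- If D is a critical set for M ∈ 𝒜(s,t), then the complement M∖D is a defining set for M. Consequently, sds(M) ≤ mn − |D| for every critical set D of M, and hence M has no critical set of size more than mn − sds(M). -/
open Finset

/-- Empty the cell `(i₀, j₀)` of the partial matrix `D`. -/
def removeCell {m n : ℕ} (D : Fin m → Fin n → Option Bool) (i₀ : Fin m) (j₀ : Fin n) :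
    Fin m → Fin n → Option Bool :=
  fun i j => if i = i₀ ∧ j = j₀ then none else D i j

/-- `D` is a critical set for `M`: a defining set such that emptying any filled cell
destroys the defining set property. -/
def IsCriticalSet {m n : ℕ} (s : Fin m → ℕ) (t : Fin n → ℕ)
    (D : Fin m → Fin n → Option Bool) (M : Fin m → Fin n → Bool) : Prop :=
  IsDefiningSet s t D M ∧
    ∀ i j, (D i j).isSome → ¬ IsDefiningSet s t (removeCell D i j) M

/-- The minimum size of a defining set for `M` within `𝒜(s,t)`. -/
noncomputable def sds {m n : ℕ} (s : Fin m → ℕ) (t : Fin n → ℕ)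
    (M : Fin m → Fin n → Bool) : ℕ :=
  sInf {k | ∃ D : Fin m → Fin n → Option Bool, IsDefiningSet s t D M ∧ psize D = k}

lemma ite_split {P Q : Prop} [Decidable P] [Decidable Q] :
    (if P then (1:ℕ) else 0) = (if P ∧ Q then 1 else 0) + (if P ∧ ¬ Q then 1 else 0) := by
  by_cases hP : P <;> by_cases hQ : Q <;> simp [hP, hQ]

lemma rowSum_eq_sum {m n : ℕ} (M : Fin m → Fin n → Bool) (i : Fin m) :
    rowSum M i = ∑ j, if M i j = true then 1 else 0 := by
  rw [rowSum, Finset.card_filter]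

lemma colSum_eq_sum {m n : ℕ} (M : Fin m → Fin n → Bool) (j : Fin n) :
    colSum M j = ∑ i, if M i j = true then 1 else 0 := by
  rw [colSum, Finset.card_filter]

/-- If `N` has the same row sum as `M` in row `i`, the cells of row `i` where they differ
are balanced between `M`-true and `M`-false cells. -/
lemma diff_row_balance {m n : ℕ} (M N : Fin m → Fin n → Bool) (i : Fin m)
    (h : rowSum N i = rowSum M i) :
    (∑ j, if M i j = true ∧ N i j ≠ M i j then (1:ℕ) else 0) =
      ∑ j, if M i j = false ∧ N i j ≠ M i j then (1:ℕ) else 0 := by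
  have hM : rowSum M i = (∑ j, if M i j = true ∧ N i j = true then (1:ℕ) else 0)
      + ∑ j, if M i j = true ∧ N i j ≠ M i j then (1:ℕ) else 0 := by
    rw [rowSum_eq_sum, ← Finset.sum_add_distrib]
    apply Finset.sum_congr rfl
    intro j _
    cases hm : M i j <;> cases hn : N i j <;> simp [hm, hn]
  have hN : rowSum N i = (∑ j, if M i j = true ∧ N i j = true then (1:ℕ) else 0)
      + ∑ j, if M i j = false ∧ N i j ≠ M i j then (1:ℕ) else 0 := by
    rw [rowSum_eq_sum, ← Finset.sum_add_distrib]
    apply Finset.sum_congr rfl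
    intro j _
    cases hm : M i j <;> cases hn : N i j <;> simp [hm, hn]
  omega

lemma diff_col_balance {m n : ℕ} (M N : Fin m → Fin n → Bool) (j : Fin n)
    (h : colSum N j = colSum M j) :
    (∑ i, if M i j = true ∧ N i j ≠ M i j then (1:ℕ) else 0) =
      ∑ i, if M i j = false ∧ N i j ≠ M i j then (1:ℕ) else 0 := by
  have hM : colSum M j = (∑ i, if M i j = true ∧ N i j = true then (1:ℕ) else 0)
      + ∑ i, if M i j = true ∧ N i j ≠ M i j then (1:ℕ) else 0 := by
    rw [colSum_eq_sum, ← Finset.sum_add_distrib]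
    apply Finset.sum_congr rfl
    intro i _
    cases hm : M i j <;> cases hn : N i j <;> simp [hm, hn]
  have hN : colSum N j = (∑ i, if M i j = true ∧ N i j = true then (1:ℕ) else 0)
      + ∑ i, if M i j = false ∧ N i j ≠ M i j then (1:ℕ) else 0 := by
    rw [colSum_eq_sum, ← Finset.sum_add_distrib]
    apply Finset.sum_congr rfl
    intro i _
    cases hm : M i j <;> cases hn : N i j <;> simp [hm, hn]
  omega


/-- From a balanced nonzero weight function `g`, extract a nonempty set of cells `C`,
contained in the support of `g`, that is row- and column-balanced with respect to `M`. -/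
lemma exists_balanced_cycle {m n : ℕ} (M : Fin m → Fin n → Bool) (g : Fin m × Fin n → ℕ)
    (hrow : ∀ i, (∑ j, if M i j = true then g (i, j) else 0) =
        ∑ j, if M i j = false then g (i, j) else 0)
    (hcol : ∀ j, (∑ i, if M i j = true then g (i, j) else 0) =
        ∑ i, if M i j = false then g (i, j) else 0)
    (p0 : Fin m × Fin n) (hp0 : g p0 ≠ 0) :
    ∃ C : Finset (Fin m × Fin n), C.Nonempty ∧ (∀ p ∈ C, g p ≠ 0) ∧
      (∀ i, (∑ j, if (i, j) ∈ C ∧ M i j = true then (1:ℕ) else 0) =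
        ∑ j, if (i, j) ∈ C ∧ M i j = false then (1:ℕ) else 0) ∧
      (∀ j, (∑ i, if (i, j) ∈ C ∧ M i j = true then (1:ℕ) else 0) =
        ∑ i, if (i, j) ∈ C ∧ M i j = false then (1:ℕ) else 0) := by
  classical
  -- row step: from a true cell go to a false cell in the same row
  have rowstep : ∀ p : Fin m × Fin n, g p ≠ 0 → M p.1 p.2 = true →
      ∃ q : Fin m × Fin n, q.1 = p.1 ∧ g q ≠ 0 ∧ M q.1 q.2 = false := by
    intro p hg hM
    by_contra hcon
    push_neg at hcon
    have hzero : (∑ j, if M p.1 j = false then g (p.1, j) else 0) = 0 := by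
      apply Finset.sum_eq_zero
      intro j _
      by_cases hj : M p.1 j = false
      · simp only [hj, if_true]
        by_contra hne
        exact (hcon (p.1, j) rfl hne) hj
      · simp [hj]
    have hpos : (∑ j, if M p.1 j = true then g (p.1, j) else 0) ≠ 0 := by
      intro hz
      rw [Finset.sum_eq_zero_iff] at hz
      have := hz p.2 (Finset.mem_univ _)
      rw [hM, if_pos rfl] at this
      exact hg this
    exact hpos ((hrow p.1).trans hzero)
  have colstep : ∀ p : Fin m × Fin n, g p ≠ 0 → M p.1 p.2 = false →
      ∃ q : Fin m × Fin n, q.2 = p.2 ∧ g q ≠ 0 ∧ M q.1 q.2 = true := by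
    intro p hg hM
    by_contra hcon
    push_neg at hcon
    have hzero : (∑ i, if M i p.2 = true then g (i, p.2) else 0) = 0 := by
      apply Finset.sum_eq_zero
      intro i _
      by_cases hj : M i p.2 = true
      · simp only [hj, if_true]
        by_contra hne
        exact (hcon (i, p.2) rfl hne) hj
      · simp [hj]
    have hpos : (∑ i, if M i p.2 = false then g (i, p.2) else 0) ≠ 0 := by
      intro hz
      rw [Finset.sum_eq_zero_iff] at hz
      have := hz p.1 (Finset.mem_univ _)
      rw [hM, if_pos rfl] at this
      exact hg this
    exact hpos ((hcol p.2).symm.trans hzero)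
  -- a starting true cell
  obtain ⟨p1, hps, hp1g, hp1M⟩ : ∃ p1 : Fin m × Fin n, True ∧ g p1 ≠ 0 ∧ M p1.1 p1.2 = true := by
    cases hM0 : M p0.1 p0.2 with
    | true => exact ⟨p0, trivial, hp0, hM0⟩
    | false =>
        obtain ⟨q, _, hq1, hq2⟩ := colstep p0 hp0 hM0
        exact ⟨q, trivial, hq1, hq2⟩
  -- the step function
    -- (choice-based)
  let step : Fin m × Fin n → Fin m × Fin n := fun p =>
    if h : g p ≠ 0 then
      (if hM : M p.1 p.2 = true then Classical.choose (rowstep p h hM)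
       else Classical.choose (colstep p h (by simp at hM; exact hM)))
    else p
  have step_true : ∀ p, (hg : g p ≠ 0) → (hM : M p.1 p.2 = true) →
      (step p).1 = p.1 ∧ g (step p) ≠ 0 ∧ M (step p).1 (step p).2 = false := by
    intro p hg hM
    have : step p = Classical.choose (rowstep p hg hM) := by
      simp only [step, dif_pos hg, dif_pos hM]
    rw [this]
    exact Classical.choose_spec (rowstep p hg hM)
  have step_false : ∀ p, (hg : g p ≠ 0) → (hM : M p.1 p.2 = false) →
      (step p).2 = p.2 ∧ g (step p) ≠ 0 ∧ M (step p).1 (step p).2 = true := by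
    intro p hg hM
    have hMn : ¬ M p.1 p.2 = true := by simp [hM]
    have : step p = Classical.choose (colstep p hg hM) := by
      simp only [step, dif_pos hg, dif_neg hMn]
    rw [this]
    exact Classical.choose_spec (colstep p hg hM)
  -- the walk
  set u : ℕ → Fin m × Fin n := fun k => step^[k] p1 with hu
  have u_succ : ∀ k, u (k + 1) = step (u k) := by
    intro k
    rw [hu]
    simp [Function.iterate_succ_apply']
  -- invariant
  have inv : ∀ k, g (u k) ≠ 0 ∧ M (u k).1 (u k).2 = decide (Even k) := by
    intro k
    induction k with
    | zero => exact ⟨hp1g, by show M p1.1 p1.2 = decide (Even 0); simpa using hp1M⟩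
    | succ k ih =>
        rcases ih with ⟨ihg, ihM⟩
        rw [u_succ]
        by_cases hk : Even k
        · have hM : M (u k).1 (u k).2 = true := by rw [ihM]; simp [hk]
          obtain ⟨_, h2, h3⟩ := step_true (u k) ihg hM
          refine ⟨h2, ?_⟩
          rw [h3]
          simp [Nat.even_add_one, hk]
        · have hM : M (u k).1 (u k).2 = false := by rw [ihM]; simp [hk]
          obtain ⟨_, h2, h3⟩ := step_false (u k) ihg hM
          refine ⟨h2, ?_⟩
          rw [h3]
          simp [Nat.even_add_one, hk]
  have u_row : ∀ k, Even k → (u (k + 1)).1 = (u k).1 := by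
    intro k hk
    have hM : M (u k).1 (u k).2 = true := by rw [(inv k).2]; simp [hk]
    rw [u_succ]
    exact (step_true (u k) (inv k).1 hM).1
  have u_col : ∀ k, ¬ Even k → (u (k + 1)).2 = (u k).2 := by
    intro k hk
    have hM : M (u k).1 (u k).2 = false := by rw [(inv k).2]; simp [hk]
    rw [u_succ]
    exact (step_false (u k) (inv k).1 hM).1
  -- pigeonhole: find a repeat
  have hrep : ∃ b, ∃ a, a < b ∧ u a = u b := by
    obtain ⟨x, y, hxy, hmapeq⟩ := Finite.exists_ne_map_eq_of_infinite u
    rcases lt_or_gt_of_ne hxy with h | h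
    · exact ⟨y, x, h, hmapeq⟩
    · exact ⟨x, y, h, hmapeq.symm⟩
  set b0 := Nat.find hrep with hb0
  obtain ⟨a0, ha0b', huab'⟩ := Nat.find_spec hrep
  have ha0b : a0 < b0 := ha0b'
  have huab : u a0 = u b0 := huab'
  -- injectivity below b0
  have uinj : ∀ x y, x < y → y < b0 → u x ≠ u y := by
    intro x y hxy hyb heq
    exact Nat.find_min hrep hyb ⟨x, hxy, heq⟩
  -- parity of a0 and b0 agree
  have hpar : Even a0 ↔ Even b0 := by
    have h1 := (inv a0).2
    have h2 := (inv b0).2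
    rw [huab] at h1
    rw [h1] at h2
    constructor <;> intro h <;> by_contra hc <;> simp [h, hc] at h2
  set C : Finset (Fin m × Fin n) := (Finset.Ico a0 b0).image u with hC
  have memC : ∀ p, p ∈ C ↔ ∃ k, a0 ≤ k ∧ k < b0 ∧ u k = p := by
    intro p
    simp [hC, Finset.mem_image, Finset.mem_Ico, and_assoc]
  -- step maps C to C
  have step_memC : ∀ k, a0 ≤ k → k < b0 → step (u k) ∈ C := by
    intro k hak hkb
    rw [← u_succ]
    by_cases h : k + 1 < b0
    · exact (memC _).2 ⟨k + 1, by omega, h, rfl⟩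
    · have hkb1 : k + 1 = b0 := by omega
      rw [hkb1, ← huab]
      exact (memC _).2 ⟨a0, le_refl _, ha0b, rfl⟩
  -- step is injective on indices of C
  have step_injC : ∀ x y, a0 ≤ x → x < b0 → a0 ≤ y → y < b0 →
      u (x + 1) = u (y + 1) → u x = u y := by
    intro x y hax hxb hay hyb heq
    rcases eq_or_lt_of_le (Nat.succ_le_of_lt hxb) with hx1 | hx1 <;>
      rcases eq_or_lt_of_le (Nat.succ_le_of_lt hyb) with hy1 | hy1
    · rw [(by omega : x = y)]
    · exfalso
      have hxb0 : x + 1 = b0 := hx1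
      rw [hxb0, ← huab] at heq
      rcases Nat.lt_or_ge a0 (y+1) with h | h
      · exact uinj a0 (y+1) h hy1 heq
      · omega
    · exfalso
      have hyb0 : y + 1 = b0 := hy1
      rw [hyb0, ← huab] at heq
      rcases Nat.lt_or_ge a0 (x+1) with h | h
      · exact uinj a0 (x+1) h hx1 heq.symm
      · omega
    · rcases Nat.lt_trichotomy x y with h | h | h
      · exact absurd heq (uinj (x+1) (y+1) (by omega) hy1)
      · rw [h]
      · exact absurd heq.symm (uinj (y+1) (x+1) (by omega) hx1)
  -- surjectivity: every cell of C is step of a cell of C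
  have step_surjC : ∀ k, a0 ≤ k → k < b0 → ∃ k', a0 ≤ k' ∧ k' < b0 ∧ u (k' + 1) = u k := by
    intro k hak hkb
    rcases eq_or_lt_of_le hak with h | h
    · refine ⟨b0 - 1, by omega, by omega, ?_⟩
      rw [(by omega : b0 - 1 + 1 = b0), ← huab, h]
    · exact ⟨k - 1, by omega, by omega, by rw [(by omega : k - 1 + 1 = k)]⟩
  have gC : ∀ p ∈ C, g p ≠ 0 := by
    intro p hp
    obtain ⟨k, _, _, hk⟩ := (memC p).1 hp
    rw [← hk]
    exact (inv k).1
  have parC : ∀ k, a0 ≤ k → k < b0 → (M (u k).1 (u k).2 = true ↔ Even k) := by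
    intro k _ _
    rw [(inv k).2]
    constructor
    · intro h; simpa using h
    · intro h; simp [h]
  refine ⟨C, ⟨u a0, (memC _).2 ⟨a0, le_refl _, ha0b, rfl⟩⟩, gC, ?_, ?_⟩
  · -- row balance
    intro i
    rw [← Finset.card_filter, ← Finset.card_filter]
    refine Finset.card_bij (fun j _ => (step (i, j)).2) ?_ ?_ ?_
    · intro j hj
      rw [Finset.mem_filter] at hj
      obtain ⟨_, hjC, hjM⟩ := hj
      obtain ⟨k, hak, hkb, hk⟩ := (memC _).1 hjC
      have hg : g (i, j) ≠ 0 := gC _ hjC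
      obtain ⟨h1, h2, h3⟩ := step_true (i, j) hg hjM
      have hstepC : step (i, j) ∈ C := by rw [← hk]; exact step_memC k hak hkb
      have hpair : (i, (step (i, j)).2) = step (i, j) := Prod.ext h1.symm rfl
      rw [Finset.mem_filter]
      refine ⟨Finset.mem_univ _, ?_, ?_⟩
      · show (i, (step (i, j)).2) ∈ C
        rw [hpair]; exact hstepC
      · show M i (step (i, j)).2 = false
        rw [h1] at h3
        exact h3
    · intro j1 hj1 j2 hj2 heq
      rw [Finset.mem_filter] at hj1 hj2
      obtain ⟨_, hj1C, hj1M⟩ := hj1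
      obtain ⟨_, hj2C, hj2M⟩ := hj2
      have hg1 : g (i, j1) ≠ 0 := gC _ hj1C
      have hg2 : g (i, j2) ≠ 0 := gC _ hj2C
      have hr1 := (step_true (i, j1) hg1 hj1M).1
      have hr2 := (step_true (i, j2) hg2 hj2M).1
      have hsteq : step (i, j1) = step (i, j2) := by
        have : (step (i, j1)).1 = (step (i, j2)).1 := by rw [hr1, hr2]
        exact Prod.ext this heq
      obtain ⟨k1, hak1, hkb1, hk1⟩ := (memC _).1 hj1C
      obtain ⟨k2, hak2, hkb2, hk2⟩ := (memC _).1 hj2C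
      have : u (k1 + 1) = u (k2 + 1) := by
        rw [u_succ, u_succ, hk1, hk2, hsteq]
      have := step_injC k1 k2 hak1 hkb1 hak2 hkb2 this
      rw [hk1, hk2] at this
      exact (Prod.mk.injEq _ _ _ _ ▸ this).2
    · intro j' hj'
      rw [Finset.mem_filter] at hj'
      obtain ⟨_, hj'C, hj'M⟩ := hj'
      obtain ⟨y, hay, hyb, hy⟩ := (memC _).1 hj'C
      obtain ⟨k', hak', hkb', hk'⟩ := step_surjC y hay hyb
      have hMk' : M (u k').1 (u k').2 = true := by
        by_contra hc
        have hf : M (u k').1 (u k').2 = false := by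
          cases h : M (u k').1 (u k').2
          · rfl
          · exact absurd h hc
        have := (step_false (u k') (inv k').1 hf).2.2
        rw [← u_succ, hk', hy] at this
        rw [hj'M] at this
        exact absurd this (by simp)
      obtain ⟨h1, _, _⟩ := step_true (u k') (inv k').1 hMk'
      have hrow1 : (u k').1 = i := by
        have : (step (u k')).1 = i := by
          rw [← u_succ, hk', hy]
        rw [h1] at this
        exact this
      have hkmem : (i, (u k').2) = u k' := by
        rw [← hrow1]
      refine ⟨(u k').2, ?_, ?_⟩
      · rw [Finset.mem_filter]
        refine ⟨Finset.mem_univ _, ?_, ?_⟩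
        · show (i, (u k').2) ∈ C
          rw [hkmem]; exact (memC _).2 ⟨k', hak', hkb', rfl⟩
        · show M i (u k').2 = true
          rw [← hrow1]; exact hMk'
      · show (step (i, (u k').2)).2 = j'
        rw [hkmem, ← u_succ, hk', hy]
  · -- column balance
    intro j
    rw [← Finset.card_filter, ← Finset.card_filter]
    refine (Finset.card_bij (fun x _ => (step (x, j)).1) ?_ ?_ ?_).symm
    · intro x hx
      rw [Finset.mem_filter] at hx
      obtain ⟨_, hxC, hxM⟩ := hx
      obtain ⟨k, hak, hkb, hk⟩ := (memC _).1 hxC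
      have hg : g (x, j) ≠ 0 := gC _ hxC
      obtain ⟨h1, h2, h3⟩ := step_false (x, j) hg hxM
      have hstepC : step (x, j) ∈ C := by rw [← hk]; exact step_memC k hak hkb
      have hpair : ((step (x, j)).1, j) = step (x, j) := Prod.ext rfl h1.symm
      rw [Finset.mem_filter]
      refine ⟨Finset.mem_univ _, ?_, ?_⟩
      · show ((step (x, j)).1, j) ∈ C
        rw [hpair]; exact hstepC
      · show M (step (x, j)).1 j = true
        rw [h1] at h3
        exact h3
    · intro x1 hx1 x2 hx2 heq
      rw [Finset.mem_filter] at hx1 hx2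
      obtain ⟨_, hx1C, hx1M⟩ := hx1
      obtain ⟨_, hx2C, hx2M⟩ := hx2
      have hg1 : g (x1, j) ≠ 0 := gC _ hx1C
      have hg2 : g (x2, j) ≠ 0 := gC _ hx2C
      have hr1 := (step_false (x1, j) hg1 hx1M).1
      have hr2 := (step_false (x2, j) hg2 hx2M).1
      have hsteq : step (x1, j) = step (x2, j) := by
        have : (step (x1, j)).2 = (step (x2, j)).2 := by rw [hr1, hr2]
        exact Prod.ext heq this
      obtain ⟨k1, hak1, hkb1, hk1⟩ := (memC _).1 hx1C
      obtain ⟨k2, hak2, hkb2, hk2⟩ := (memC _).1 hx2C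
      have : u (k1 + 1) = u (k2 + 1) := by
        rw [u_succ, u_succ, hk1, hk2, hsteq]
      have := step_injC k1 k2 hak1 hkb1 hak2 hkb2 this
      rw [hk1, hk2] at this
      exact (Prod.mk.injEq _ _ _ _ ▸ this).1
    · intro x' hx'
      rw [Finset.mem_filter] at hx'
      obtain ⟨_, hx'C, hx'M⟩ := hx'
      obtain ⟨y, hay, hyb, hy⟩ := (memC _).1 hx'C
      obtain ⟨k', hak', hkb', hk'⟩ := step_surjC y hay hyb
      have hMk' : M (u k').1 (u k').2 = false := by
        by_contra hc
        have hf : M (u k').1 (u k').2 = true := by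
          cases h : M (u k').1 (u k').2
          · exact absurd h hc
          · rfl
        have := (step_true (u k') (inv k').1 hf).2.2
        rw [← u_succ, hk', hy] at this
        rw [hx'M] at this
        exact absurd this (by simp)
      obtain ⟨h1, _, _⟩ := step_false (u k') (inv k').1 hMk'
      have hcol1 : (u k').2 = j := by
        have : (step (u k')).2 = j := by
          rw [← u_succ, hk', hy]
        rw [h1] at this
        exact this
      have hkmem : ((u k').1, j) = u k' := by
        rw [← hcol1]
      refine ⟨(u k').1, ?_, ?_⟩
      · rw [Finset.mem_filter]
        refine ⟨Finset.mem_univ _, ?_, ?_⟩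
        · show ((u k').1, j) ∈ C
          rw [hkmem]; exact (memC _).2 ⟨k', hak', hkb', rfl⟩
        · show M (u k').1 j = false
          rw [← hcol1]; exact hMk'
      · show (step ((u k').1, j)).1 = x'
        rw [hkmem, ← u_succ, hk', hy]
/-- The complement of a critical set is a defining set; consequently
`sds(M) ≤ mn - |D|` for every critical set `D`, i.e. `M` has no critical set of size
more than `mn - sds(M)`. -/
theorem complement_of_critical_is_defining {m n : ℕ} (s : Fin m → ℕ) (t : Fin n → ℕ)
    (D : Fin m → Fin n → Option Bool) (M : Fin m → Fin n → Bool)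
    (hD : IsCriticalSet s t D M) :
    IsDefiningSet s t (matMinus M D) M ∧
      sds s t M ≤ m * n - psize D ∧
      psize D ≤ m * n - sds s t M := by
  classical
  obtain ⟨hDdef, hcrit⟩ := hD
  obtain ⟨hMclass, hDM, huniq⟩ := hDdef
  have part1 : IsDefiningSet s t (matMinus M D) M := by
    refine ⟨hMclass, ?_, ?_⟩
    · intro i j b hb
      unfold matMinus at hb
      by_cases h : (D i j).isSome
      · rw [if_pos h] at hb; cases hb
      · rw [if_neg h] at hb; exact Option.some.inj hb
    · intro M' hM'class hM'cont
      by_contra hne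
      -- the set of cells where M' and M differ
      set d : Finset (Fin m × Fin n) :=
        Finset.univ.filter (fun c : Fin m × Fin n => M' c.1 c.2 ≠ M c.1 c.2) with hd
      have hmemd : ∀ c : Fin m × Fin n, c ∈ d ↔ M' c.1 c.2 ≠ M c.1 c.2 := by
        intro c; simp [hd]
      have hdne : d.Nonempty := by
        rw [Finset.nonempty_iff_ne_empty]
        intro hem
        apply hne
        funext i j
        by_contra hc
        have : (i, j) ∈ d := (hmemd (i, j)).2 hc
        rw [hem] at this
        exact absurd this (Finset.notMem_empty _)
      have hDsome : ∀ c ∈ d, (D c.1 c.2).isSome := by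
        intro c hc
        by_contra h
        have hmm : matMinus M D c.1 c.2 = some (M c.1 c.2) := by
          unfold matMinus; rw [if_neg h]
        exact ((hmemd c).1 hc) (hM'cont c.1 c.2 _ hmm)
      -- witnesses from criticality
      have hWex : ∀ c : Fin m × Fin n, ∃ Wc : Fin m → Fin n → Bool, c ∈ d →
          inClass s t Wc ∧ containedIn (removeCell D c.1 c.2) Wc ∧ Wc ≠ M := by
        intro c
        by_cases hc : c ∈ d
        · have hnd := hcrit c.1 c.2 (hDsome c hc)
          unfold IsDefiningSet at hnd
          push_neg at hnd
          have hcont : containedIn (removeCell D c.1 c.2) M := by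
            intro i j b hb
            unfold removeCell at hb
            by_cases h : (i = c.1 ∧ j = c.2)
            · rw [if_pos h] at hb; cases hb
            · rw [if_neg h] at hb; exact hDM i j b hb
          obtain ⟨Wc, hW1, hW2, hW3⟩ := hnd hMclass hcont
          exact ⟨Wc, fun _ => ⟨hW1, hW2, hW3⟩⟩
        · exact ⟨M, fun h => absurd h hc⟩
      choose W hW using hWex
      have hWclass : ∀ c ∈ d, inClass s t (W c) := fun c hc => (hW c hc).1
      have hWagree : ∀ c ∈ d, ∀ p : Fin m × Fin n, (D p.1 p.2).isSome → p ≠ c →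
          W c p.1 p.2 = M p.1 p.2 := by
        intro c hc p hsome hpc
        obtain ⟨b, hb⟩ := Option.isSome_iff_exists.1 hsome
        have hrc : removeCell D c.1 c.2 p.1 p.2 = some b := by
          unfold removeCell
          rw [if_neg, hb]
          intro ⟨h1, h2⟩
          exact hpc (Prod.ext h1 h2)
        rw [(hW c hc).2.1 p.1 p.2 b hrc, hDM p.1 p.2 b hb]
      have hWc : ∀ c ∈ d, W c c.1 c.2 ≠ M c.1 c.2 := by
        intro c hc heq
        apply (hW c hc).2.2
        apply huniq _ (hWclass c hc)
        intro i j b hb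
        by_cases hpc : (i, j) = c
        · subst hpc
          exact heq.trans (hDM i j b hb)
        · have hrc : removeCell D c.1 c.2 i j = some b := by
            unfold removeCell
            rw [if_neg, hb]
            intro ⟨h1, h2⟩
            exact hpc (Prod.ext h1 h2)
          exact (hW c hc).2.1 i j b hrc
      -- the weight function
      set g : Fin m × Fin n → ℕ :=
        fun p => ∑ c ∈ d, if W c p.1 p.2 ≠ M p.1 p.2 ∧ p ≠ c then 1 else 0 with hg
      have hgS : ∀ p : Fin m × Fin n, (D p.1 p.2).isSome → g p = 0 := by
        intro p hsome
        rw [hg]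
        apply Finset.sum_eq_zero
        intro c hc
        by_cases hpc : p = c
        · rw [if_neg]; intro ⟨_, h⟩; exact h hpc
        · rw [if_neg]; intro ⟨h, _⟩; exact h (hWagree c hc p hsome hpc)
      -- g is nonzero somewhere
      obtain ⟨p1, hp1⟩ : ∃ p1, g p1 ≠ 0 := by
        obtain ⟨c0, hc0⟩ := hdne
        have hrs : rowSum (W c0) c0.1 = rowSum M c0.1 := by
          rw [(hWclass c0 hc0).1 c0.1, hMclass.1 c0.1]
        have hbal := diff_row_balance M (W c0) c0.1 hrs
        have hget : ∃ j, W c0 c0.1 j ≠ M c0.1 j ∧ j ≠ c0.2 := by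
          cases hMc : M c0.1 c0.2 with
          | true =>
              have hterm : (if M c0.1 c0.2 = true ∧ W c0 c0.1 c0.2 ≠ M c0.1 c0.2
                  then (1:ℕ) else 0) = 1 := if_pos ⟨hMc, hWc c0 hc0⟩
              have hpos : (∑ j, if M c0.1 j = true ∧ W c0 c0.1 j ≠ M c0.1 j
                  then (1:ℕ) else 0) ≠ 0 := by
                intro hz
                rw [Finset.sum_eq_zero_iff] at hz
                have := hz c0.2 (Finset.mem_univ _)
                omega
              rw [hbal] at hpos
              obtain ⟨j, _, hj⟩ := Finset.exists_ne_zero_of_sum_ne_zero hpos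
              have hj' : M c0.1 j = false ∧ W c0 c0.1 j ≠ M c0.1 j := by
                by_contra hcon
                rw [if_neg hcon] at hj
                exact hj rfl
              refine ⟨j, hj'.2, ?_⟩
              intro heq
              rw [heq, hMc] at hj'
              exact absurd hj'.1 (by simp)
          | false =>
              have hpos : (∑ j, if M c0.1 j = false ∧ W c0 c0.1 j ≠ M c0.1 j
                  then (1:ℕ) else 0) ≠ 0 := by
                intro hz
                rw [Finset.sum_eq_zero_iff] at hz
                have := hz c0.2 (Finset.mem_univ _)
                rw [if_pos ⟨hMc, hWc c0 hc0⟩] at this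
                omega
              rw [← hbal] at hpos
              obtain ⟨j, _, hj⟩ := Finset.exists_ne_zero_of_sum_ne_zero hpos
              have hj' : M c0.1 j = true ∧ W c0 c0.1 j ≠ M c0.1 j := by
                by_contra hcon
                rw [if_neg hcon] at hj
                exact hj rfl
              refine ⟨j, hj'.2, ?_⟩
              intro heq
              rw [heq, hMc] at hj'
              exact absurd hj'.1 (by simp)
        obtain ⟨j, hjW, hjne⟩ := hget
        refine ⟨(c0.1, j), ?_⟩
        intro hz
        rw [hg] at hz
        rw [Finset.sum_eq_zero_iff] at hz
        have := hz c0 hc0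
        rw [if_pos ⟨hjW, by intro h; exact hjne (congrArg Prod.snd h)⟩] at this
        omega
      -- row balance of g
      have hrowg : ∀ i, (∑ j, if M i j = true then g (i, j) else 0) =
          ∑ j, if M i j = false then g (i, j) else 0 := by
        intro i
        have swap : ∀ b : Bool, (∑ j, if M i j = b then g (i, j) else 0)
            = ∑ c ∈ d, ∑ j, if M i j = b ∧ W c i j ≠ M i j ∧ (i, j) ≠ c then (1:ℕ) else 0 := by
          intro b
          have e : ∀ j, (if M i j = b then g (i, j) else 0)
              = ∑ c ∈ d, if M i j = b ∧ W c i j ≠ M i j ∧ (i, j) ≠ c then (1:ℕ) else 0 := by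
            intro j
            by_cases hP : M i j = b
            · rw [if_pos hP]
              show (∑ c ∈ d, if W c i j ≠ M i j ∧ (i, j) ≠ c then (1:ℕ) else 0) = _
              apply Finset.sum_congr rfl
              intro c _
              by_cases hQ : W c i j ≠ M i j ∧ (i, j) ≠ c
              · rw [if_pos hQ, if_pos ⟨hP, hQ⟩]
              · rw [if_neg hQ, if_neg fun h => hQ ⟨h.2.1, h.2.2⟩]
            · rw [if_neg hP]
              symm
              apply Finset.sum_eq_zero
              intro c _
              exact if_neg fun h => hP h.1
          rw [Finset.sum_congr rfl fun j _ => e j, Finset.sum_comm]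
        have key : ∀ b : Bool, ∀ c ∈ d,
            (∑ j, if M i j = b ∧ W c i j ≠ M i j ∧ (i, j) ≠ c then (1:ℕ) else 0)
            + (if c.1 = i ∧ M i c.2 = b then (1:ℕ) else 0)
            = ∑ j, if M i j = b ∧ W c i j ≠ M i j then (1:ℕ) else 0 := by
          intro b c hc
          obtain ⟨x, y⟩ := c
          by_cases hc1 : x = i
          · subst hc1
            show (∑ j, if M x j = b ∧ W (x, y) x j ≠ M x j ∧ (x, j) ≠ (x, y) then (1:ℕ) else 0)
                + (if x = x ∧ M x y = b then (1:ℕ) else 0)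
                = ∑ j, if M x j = b ∧ W (x, y) x j ≠ M x j then (1:ℕ) else 0
            have hWxy : W (x, y) x y ≠ M x y := hWc (x, y) hc
            have hpt : ∀ j, (if M x j = b ∧ W (x, y) x j ≠ M x j then (1:ℕ) else 0)
                = (if M x j = b ∧ W (x, y) x j ≠ M x j ∧ (x, j) ≠ (x, y) then (1:ℕ) else 0)
                  + (if j = y then (if M x y = b then (1:ℕ) else 0) else 0) := by
              intro j
              by_cases hjy : j = y
              · subst hjy
                by_cases hb2 : M x j = b
                · have h3 : ¬ (M x j = b ∧ W (x, j) x j ≠ M x j ∧ (x, j) ≠ (x, j)) :=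
                    fun h => h.2.2 rfl
                  rw [if_pos ⟨hb2, hWxy⟩, if_neg h3]
                  simp [hb2]
                · rw [if_neg fun h => hb2 h.1, if_neg fun h => hb2 h.1]
                  simp [hb2]
              · rw [if_neg hjy, Nat.add_zero]
                by_cases hcnd : M x j = b ∧ W (x, y) x j ≠ M x j
                · rw [if_pos hcnd,
                    if_pos ⟨hcnd.1, hcnd.2, fun h => hjy (congrArg Prod.snd h)⟩]
                · rw [if_neg hcnd, if_neg fun h => hcnd ⟨h.1, h.2.1⟩]
            rw [Finset.sum_congr rfl fun j _ => hpt j, Finset.sum_add_distrib,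
              Finset.sum_ite_eq' Finset.univ y (fun _ => if M x y = b then (1:ℕ) else 0)]
            have hind : (if x = x ∧ M x y = b then (1:ℕ) else 0)
                = if y ∈ Finset.univ then (if M x y = b then (1:ℕ) else 0) else 0 := by
              by_cases hb2 : M x y = b <;> simp [hb2]
            rw [hind]
          · have h0 : (if (x, y).1 = i ∧ M i (x, y).2 = b then (1:ℕ) else 0) = 0 :=
              if_neg fun h => hc1 h.1
            rw [h0, Nat.add_zero]
            apply Finset.sum_congr rfl
            intro j _
            by_cases hcnd : M i j = b ∧ W (x, y) i j ≠ M i j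
            · rw [if_pos ⟨hcnd.1, hcnd.2, fun h => hc1 (congrArg Prod.fst h).symm⟩,
                if_pos hcnd]
            · rw [if_neg fun h => hcnd ⟨h.1, h.2.1⟩, if_neg hcnd]
        have hdcount : ∀ b : Bool, (∑ c ∈ d, if c.1 = i ∧ M i c.2 = b then (1:ℕ) else 0)
            = ∑ j, if M i j = b ∧ M' i j ≠ M i j then (1:ℕ) else 0 := by
          intro b
          rw [hd, Finset.sum_filter, Fintype.sum_prod_type]
          have e : ∀ x : Fin m, (∑ y, if M' x y ≠ M x y then
              (if (x, y).1 = i ∧ M i (x, y).2 = b then (1:ℕ) else 0) else 0)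
              = if x = i then (∑ j, if M i j = b ∧ M' i j ≠ M i j then (1:ℕ) else 0) else 0 := by
            intro x
            by_cases hx : x = i
            · subst hx
              rw [if_pos rfl]
              apply Finset.sum_congr rfl
              intro y _
              by_cases h1 : M' x y ≠ M x y <;> by_cases h2 : M x y = b <;> simp [h1, h2]
            · rw [if_neg hx]
              apply Finset.sum_eq_zero
              intro y _
              by_cases h1 : M' x y ≠ M x y <;> simp [h1, hx]
          rw [Finset.sum_congr rfl fun x _ => e x, Finset.sum_ite_eq' Finset.univ i
            (fun _ => ∑ j, if M i j = b ∧ M' i j ≠ M i j then (1:ℕ) else 0)]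
          simp
        have hsumkey : ∀ b : Bool,
            (∑ c ∈ d, ∑ j, if M i j = b ∧ W c i j ≠ M i j ∧ (i, j) ≠ c then (1:ℕ) else 0)
            + (∑ c ∈ d, if c.1 = i ∧ M i c.2 = b then (1:ℕ) else 0)
            = ∑ c ∈ d, ∑ j, if M i j = b ∧ W c i j ≠ M i j then (1:ℕ) else 0 := by
          intro b
          rw [← Finset.sum_add_distrib]
          exact Finset.sum_congr rfl fun c hc => key b c hc
        have hT : (∑ c ∈ d, ∑ j, if M i j = true ∧ W c i j ≠ M i j then (1:ℕ) else 0)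
            = ∑ c ∈ d, ∑ j, if M i j = false ∧ W c i j ≠ M i j then (1:ℕ) else 0 := by
          apply Finset.sum_congr rfl
          intro c hc
          exact diff_row_balance M (W c) i (by rw [(hWclass c hc).1 i, hMclass.1 i])
        have hE : (∑ c ∈ d, if c.1 = i ∧ M i c.2 = true then (1:ℕ) else 0)
            = ∑ c ∈ d, if c.1 = i ∧ M i c.2 = false then (1:ℕ) else 0 := by
          rw [hdcount true, hdcount false]
          exact diff_row_balance M M' i (by rw [hM'class.1 i, hMclass.1 i])
        have h1 := hsumkey true
        have h2 := hsumkey false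
        rw [swap true, swap false]
        omega
      have hcolg : ∀ j, (∑ i, if M i j = true then g (i, j) else 0) =
          ∑ i, if M i j = false then g (i, j) else 0 := by
        intro j
        have swap : ∀ b : Bool, (∑ i, if M i j = b then g (i, j) else 0)
            = ∑ c ∈ d, ∑ i, if M i j = b ∧ W c i j ≠ M i j ∧ (i, j) ≠ c then (1:ℕ) else 0 := by
          intro b
          have e : ∀ i, (if M i j = b then g (i, j) else 0)
              = ∑ c ∈ d, if M i j = b ∧ W c i j ≠ M i j ∧ (i, j) ≠ c then (1:ℕ) else 0 := by
            intro i
            by_cases hP : M i j = b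
            · rw [if_pos hP]
              show (∑ c ∈ d, if W c i j ≠ M i j ∧ (i, j) ≠ c then (1:ℕ) else 0) = _
              apply Finset.sum_congr rfl
              intro c _
              by_cases hQ : W c i j ≠ M i j ∧ (i, j) ≠ c
              · rw [if_pos hQ, if_pos ⟨hP, hQ⟩]
              · rw [if_neg hQ, if_neg fun h => hQ ⟨h.2.1, h.2.2⟩]
            · rw [if_neg hP]
              symm
              apply Finset.sum_eq_zero
              intro c _
              exact if_neg fun h => hP h.1
          rw [Finset.sum_congr rfl fun i _ => e i, Finset.sum_comm]
        have key : ∀ b : Bool, ∀ c ∈ d,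
            (∑ i, if M i j = b ∧ W c i j ≠ M i j ∧ (i, j) ≠ c then (1:ℕ) else 0)
            + (if c.2 = j ∧ M c.1 j = b then (1:ℕ) else 0)
            = ∑ i, if M i j = b ∧ W c i j ≠ M i j then (1:ℕ) else 0 := by
          intro b c hc
          obtain ⟨z, y⟩ := c
          by_cases hc2 : y = j
          · subst hc2
            show (∑ i, if M i y = b ∧ W (z, y) i y ≠ M i y ∧ (i, y) ≠ (z, y) then (1:ℕ) else 0)
                + (if y = y ∧ M z y = b then (1:ℕ) else 0)
                = ∑ i, if M i y = b ∧ W (z, y) i y ≠ M i y then (1:ℕ) else 0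
            have hWzy : W (z, y) z y ≠ M z y := hWc (z, y) hc
            have hpt : ∀ i, (if M i y = b ∧ W (z, y) i y ≠ M i y then (1:ℕ) else 0)
                = (if M i y = b ∧ W (z, y) i y ≠ M i y ∧ (i, y) ≠ (z, y) then (1:ℕ) else 0)
                  + (if i = z then (if M z y = b then (1:ℕ) else 0) else 0) := by
              intro i
              by_cases hiz : i = z
              · subst hiz
                by_cases hb2 : M i y = b
                · have h3 : ¬ (M i y = b ∧ W (i, y) i y ≠ M i y ∧ (i, y) ≠ (i, y)) :=
                    fun h => h.2.2 rfl
                  rw [if_pos ⟨hb2, hWzy⟩, if_neg h3]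
                  simp [hb2]
                · rw [if_neg fun h => hb2 h.1, if_neg fun h => hb2 h.1]
                  simp [hb2]
              · rw [if_neg hiz, Nat.add_zero]
                by_cases hcnd : M i y = b ∧ W (z, y) i y ≠ M i y
                · rw [if_pos hcnd,
                    if_pos ⟨hcnd.1, hcnd.2, fun h => hiz (congrArg Prod.fst h)⟩]
                · rw [if_neg hcnd, if_neg fun h => hcnd ⟨h.1, h.2.1⟩]
            rw [Finset.sum_congr rfl fun i _ => hpt i, Finset.sum_add_distrib,
              Finset.sum_ite_eq' Finset.univ z (fun _ => if M z y = b then (1:ℕ) else 0)]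
            have hind : (if y = y ∧ M z y = b then (1:ℕ) else 0)
                = if z ∈ Finset.univ then (if M z y = b then (1:ℕ) else 0) else 0 := by
              by_cases hb2 : M z y = b <;> simp [hb2]
            rw [hind]
          · have h0 : (if (z, y).2 = j ∧ M (z, y).1 j = b then (1:ℕ) else 0) = 0 :=
              if_neg fun h => hc2 h.1
            rw [h0, Nat.add_zero]
            apply Finset.sum_congr rfl
            intro i _
            by_cases hcnd : M i j = b ∧ W (z, y) i j ≠ M i j
            · rw [if_pos ⟨hcnd.1, hcnd.2, fun h => hc2 (congrArg Prod.snd h).symm⟩,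
                if_pos hcnd]
            · rw [if_neg fun h => hcnd ⟨h.1, h.2.1⟩, if_neg hcnd]
        have hdcount : ∀ b : Bool, (∑ c ∈ d, if c.2 = j ∧ M c.1 j = b then (1:ℕ) else 0)
            = ∑ i, if M i j = b ∧ M' i j ≠ M i j then (1:ℕ) else 0 := by
          intro b
          rw [hd, Finset.sum_filter, Fintype.sum_prod_type]
          apply Finset.sum_congr rfl
          intro x _
          have ept : ∀ y, (if M' x y ≠ M x y then
              (if (x, y).2 = j ∧ M (x, y).1 j = b then (1:ℕ) else 0) else 0)
              = if y = j then (if M x j = b ∧ M' x j ≠ M x j then (1:ℕ) else 0) else 0 := by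
            intro y
            by_cases hyj : y = j
            · subst hyj
              by_cases h1 : M' x y ≠ M x y <;> by_cases h2 : M x y = b <;> simp [h1, h2]
            · by_cases h1 : M' x y ≠ M x y <;> simp [h1, hyj]
          rw [Finset.sum_congr rfl fun y _ => ept y, Finset.sum_ite_eq' Finset.univ j
            (fun _ => if M x j = b ∧ M' x j ≠ M x j then (1:ℕ) else 0)]
          simp
        have hsumkey : ∀ b : Bool,
            (∑ c ∈ d, ∑ i, if M i j = b ∧ W c i j ≠ M i j ∧ (i, j) ≠ c then (1:ℕ) else 0)
            + (∑ c ∈ d, if c.2 = j ∧ M c.1 j = b then (1:ℕ) else 0)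
            = ∑ c ∈ d, ∑ i, if M i j = b ∧ W c i j ≠ M i j then (1:ℕ) else 0 := by
          intro b
          rw [← Finset.sum_add_distrib]
          exact Finset.sum_congr rfl fun c hc => key b c hc
        have hT : (∑ c ∈ d, ∑ i, if M i j = true ∧ W c i j ≠ M i j then (1:ℕ) else 0)
            = ∑ c ∈ d, ∑ i, if M i j = false ∧ W c i j ≠ M i j then (1:ℕ) else 0 := by
          apply Finset.sum_congr rfl
          intro c hc
          exact diff_col_balance M (W c) j (by rw [(hWclass c hc).2 j, hMclass.2 j])
        have hE : (∑ c ∈ d, if c.2 = j ∧ M c.1 j = true then (1:ℕ) else 0)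
            = ∑ c ∈ d, if c.2 = j ∧ M c.1 j = false then (1:ℕ) else 0 := by
          rw [hdcount true, hdcount false]
          exact diff_col_balance M M' j (by rw [hM'class.2 j, hMclass.2 j])
        have h1 := hsumkey true
        have h2 := hsumkey false
        rw [swap true, swap false]
        omega
      obtain ⟨C, hCne, hCg, hCrow, hCcol⟩ := exists_balanced_cycle M g hrowg hcolg p1 hp1
      -- flip M along C
      set N : Fin m → Fin n → Bool := fun x y => if (x, y) ∈ C then !(M x y) else M x y with hN
      have hNrow : ∀ i, rowSum N i = rowSum M i := by
        intro i
        rw [rowSum_eq_sum, rowSum_eq_sum]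
        have e1 : ∀ j, (if N i j = true then (1:ℕ) else 0) =
            (if (i, j) ∈ C ∧ M i j = false then (1:ℕ) else 0)
            + (if ¬ ((i, j) ∈ C) ∧ M i j = true then (1:ℕ) else 0) := by
          intro j
          by_cases hm : (i, j) ∈ C <;> cases hMij : M i j <;> simp [hN, hm, hMij]
        have e2 : ∀ j, (if M i j = true then (1:ℕ) else 0) =
            (if (i, j) ∈ C ∧ M i j = true then (1:ℕ) else 0)
            + (if ¬ ((i, j) ∈ C) ∧ M i j = true then (1:ℕ) else 0) := by
          intro j
          by_cases hm : (i, j) ∈ C <;> cases hMij : M i j <;> simp [hm, hMij]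
        rw [Finset.sum_congr rfl (fun j _ => e1 j), Finset.sum_congr rfl (fun j _ => e2 j),
          Finset.sum_add_distrib, Finset.sum_add_distrib, ← hCrow i]
      have hNcol : ∀ j, colSum N j = colSum M j := by
        intro j
        rw [colSum_eq_sum, colSum_eq_sum]
        have e1 : ∀ i, (if N i j = true then (1:ℕ) else 0) =
            (if (i, j) ∈ C ∧ M i j = false then (1:ℕ) else 0)
            + (if ¬ ((i, j) ∈ C) ∧ M i j = true then (1:ℕ) else 0) := by
          intro i
          by_cases hm : (i, j) ∈ C <;> cases hMij : M i j <;> simp [hN, hm, hMij]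
        have e2 : ∀ i, (if M i j = true then (1:ℕ) else 0) =
            (if (i, j) ∈ C ∧ M i j = true then (1:ℕ) else 0)
            + (if ¬ ((i, j) ∈ C) ∧ M i j = true then (1:ℕ) else 0) := by
          intro i
          by_cases hm : (i, j) ∈ C <;> cases hMij : M i j <;> simp [hm, hMij]
        rw [Finset.sum_congr rfl (fun i _ => e1 i), Finset.sum_congr rfl (fun i _ => e2 i),
          Finset.sum_add_distrib, Finset.sum_add_distrib, ← hCcol j]
      have hNclass : inClass s t N :=
        ⟨fun i => (hNrow i).trans (hMclass.1 i), fun j => (hNcol j).trans (hMclass.2 j)⟩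
      have hNcont : containedIn D N := by
        intro i j b hb
        have hsome : (D i j).isSome := by rw [hb]; rfl
        have hnotC : ¬ ((i, j) ∈ C) := by
          intro hmem
          exact hCg (i, j) hmem (hgS (i, j) hsome)
        rw [hN]
        simp only [if_neg hnotC]
        exact hDM i j b hb
      have hNM : N = M := huniq N hNclass hNcont
      obtain ⟨p, hp⟩ := hCne
      have hpC : (p.1, p.2) ∈ C := by rw [Prod.mk.eta]; exact hp
      have : N p.1 p.2 = !(M p.1 p.2) := by rw [hN]; simp only [if_pos hpC]
      rw [hNM] at this
      cases hMp : M p.1 p.2 <;> rw [hMp] at this <;> exact absurd this (by simp)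
  have hsplit : (Finset.univ.filter fun p : Fin m × Fin n => (D p.1 p.2).isSome).card
      + (Finset.univ.filter fun p : Fin m × Fin n => ¬ (D p.1 p.2).isSome).card
      = (Finset.univ : Finset (Fin m × Fin n)).card :=
    Finset.card_filter_add_card_filter_not _
  have hcarduniv : (Finset.univ : Finset (Fin m × Fin n)).card = m * n := by
    simp [Fintype.card_prod]
  have hfiltereq : (Finset.univ.filter fun p : Fin m × Fin n => (matMinus M D p.1 p.2).isSome)
      = Finset.univ.filter fun p : Fin m × Fin n => ¬ (D p.1 p.2).isSome := by
    apply Finset.filter_congr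
    intro p _
    unfold matMinus
    by_cases h : (D p.1 p.2).isSome <;> simp [h]
  have hsize : psize (matMinus M D) = m * n - psize D := by
    unfold psize
    rw [hfiltereq]
    unfold psize at hsplit
    omega
  have h2 : sds s t M ≤ m * n - psize D := by
    rw [← hsize]
    exact Nat.sInf_le ⟨matMinus M D, part1, rfl⟩
  have hDle : psize D ≤ m * n := by
    unfold psize
    calc (Finset.univ.filter fun p : Fin m × Fin n => (D p.1 p.2).isSome).card
        ≤ (Finset.univ : Finset (Fin m × Fin n)).card := Finset.card_filter_le _ _
      _ = m * n := hcarduniv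
  exact ⟨part1, h2, by omega⟩
end

section
/- Let 0 < λ ≤ 1/2 and let M be an m×n binary matrix in 𝒜(s,t) with density λ (i.e., λmn ones total). Suppose Δ ≥ 0 is such that for every subset R of rows and subset C of columns, the number of ones in the subarray M[R,C] differs from λ|R||C| by at most Δ. Then every defining set D for M satisfies |D| ≥ λmn − C₀·(m^{7/4} + m^{1/4}Δ + n·m^{3/4}) for some absolute constant C₀ depending only on a lower bound for λ, assuming n ≤ m. -/
open Finset

open scoped Classical


private lemma chain_getElem' {α : Type*} {R : α → α → Prop} {a : α} {l : List α}
    (h : List.Chain R a l) :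
    ∀ i, (hi : i + 1 < (a :: l).length) → R ((a :: l)[i]) ((a :: l)[i+1]) := by
  induction l generalizing a with
  | nil => intro i hi; simp at hi
  | cons b t ih =>
    rw [List.Chain, List.chain_cons] at h
    intro i hi
    cases i with
    | zero => simpa using h.1
    | succ k =>
      have hk : k + 1 < (b :: t).length := by simpa using hi
      simpa using ih h.2 k hk

private lemma exists_dup_split' {α : Type*} :
    ∀ {l : List α}, ¬ l.Nodup → ∃ (a : α) (p q s : List α), l = p ++ a :: (q ++ a :: s) := by
  intro l
  induction l with
  | nil => intro h; exact absurd List.nodup_nil h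
  | cons b t ih =>
    intro h
    by_cases hb : b ∈ t
    · obtain ⟨q, s, rfl⟩ := List.append_of_mem hb
      exact ⟨b, [], q, s, by simp⟩
    · have ht : ¬ t.Nodup := fun hnd => h (List.nodup_cons.2 ⟨hb, hnd⟩)
      obtain ⟨a, p, q, s, rfl⟩ := ih ht
      exact ⟨a, b :: p, q, s, by simp⟩

private lemma transGen_chain' {α : Type*} {R : α → α → Prop} {a b : α}
    (h : Relation.TransGen R a b) : ∃ l : List α, List.Chain R a (l ++ [b]) := by
  induction h with
  | single hab => exact ⟨[], List.chain_cons.2 ⟨hab, List.Chain.nil⟩⟩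
  | @tail b c hab hbc ih =>
    obtain ⟨l, hl⟩ := ih
    refine ⟨l ++ [b], ?_⟩
    have : List.Chain R a (l ++ b :: [c]) := List.isChain_cons_split.2 ⟨hl, List.chain_cons.2 ⟨hbc, List.Chain.nil⟩⟩
    simpa using this

private lemma exists_nodup_cycle' {α : Type*} {R : α → α → Prop} {v : α}
    (h : Relation.TransGen R v v) :
    ∃ (w : α) (l : List α), List.Chain R w (l ++ [w]) ∧ (w :: l).Nodup := by
  classical
  have hP : ∃ k, ∃ (w : α) (l : List α), List.Chain R w (l ++ [w]) ∧ l.length = k := by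
    obtain ⟨l, hl⟩ := transGen_chain' h
    exact ⟨l.length, v, l, hl, rfl⟩
  obtain ⟨w, l, hchain, hlen⟩ := Nat.find_spec hP
  refine ⟨w, l, hchain, ?_⟩
  by_contra hnd
  obtain ⟨a, p, q, s, hsplit⟩ := exists_dup_split' hnd
  have hq : List.Chain R a (q ++ [a]) ∧ q.length < l.length := by
    cases p with
    | nil =>
      simp only [List.nil_append, List.cons.injEq] at hsplit
      obtain ⟨rfl, rfl⟩ := hsplit
      have h1 : List.Chain R w (q ++ w :: (s ++ [w])) := by
        have := hchain
        rwa [List.append_assoc, List.cons_append] at this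
      exact ⟨(List.isChain_cons_split.1 h1).1, by simp⟩
    | cons b p' =>
      simp only [List.cons_append, List.cons.injEq] at hsplit
      obtain ⟨rfl, rfl⟩ := hsplit
      have h1 : List.Chain R w (p' ++ a :: ((q ++ a :: s) ++ [w])) := by
        have := hchain
        rwa [List.append_assoc, List.cons_append] at this
      have h2 : List.Chain R a ((q ++ a :: s) ++ [w]) := (List.isChain_cons_split.1 h1).2
      have h3 : List.Chain R a (q ++ a :: (s ++ [w])) := by
        rwa [List.append_assoc, List.cons_append] at h2
      exact ⟨(List.isChain_cons_split.1 h3).1, by simp; omega⟩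
  exact Nat.find_min hP (hlen ▸ hq.2) ⟨a, q, hq.1, rfl⟩

section NoCycle
variable {m n : ℕ}

private lemma cycle_formPerm_step {α : Type*} [DecidableEq α] {R : α → α → Prop} {w : α} {l : List α}
    (hchain : List.Chain R w (l ++ [w])) (hnd : (w :: l).Nodup) :
    ∀ u ∈ (w :: l), R u ((w :: l).formPerm u) := by
  intro u hu
  obtain ⟨i, hi, rfl⟩ := List.mem_iff_getElem.1 hu
  have hi' : i < l.length + 1 := by simpa using hi
  rw [List.formPerm_apply_getElem _ hnd i hi]
  have hfull := chain_getElem' hchain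
  have hlen2 : (w :: (l ++ [w])).length = l.length + 2 := by simp
  have key : ∀ (k : ℕ), (hk : k < l.length + 1) → ∀ (hk2 : k < (w :: (l ++ [w])).length),
      (w :: (l ++ [w]))[k] = (w :: l)[k]'(by simpa using hk) := by
    intro k hk hk2
    cases k with
    | zero => rfl
    | succ k' =>
      have hk' : k' < l.length := by omega
      simp only [List.getElem_cons_succ]
      exact List.getElem_append_left hk'
  have gcongr : ∀ (k k' : ℕ) (hk : k < (w :: l).length) (hk' : k' < (w :: l).length),
      k = k' → (w :: l)[k]'hk = (w :: l)[k']'hk' := by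
    rintro k _ hk hk' rfl; rfl
  have hmodlt : (i + 1) % (w :: l).length < (w :: l).length :=
    Nat.mod_lt _ (by simp)
  rcases eq_or_lt_of_le (Nat.succ_le_of_lt hi') with heq | hlt
  · have heq' : i + 1 = (w :: l).length := by simpa using heq
    have h0 : (i + 1) % (w :: l).length = 0 := by rw [heq', Nat.mod_self]
    have hk2 : i + 1 < (w :: (l ++ [w])).length := by omega
    have hR := hfull i hk2
    rw [key i hi' (by omega)] at hR
    have hend : (w :: (l ++ [w]))[i+1]'hk2 = w := by
      have hi1 : i = l.length := by omega
      subst hi1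
      simp only [List.getElem_cons_succ]
      exact List.getElem_concat_length rfl _
    rw [hend] at hR
    rw [gcongr ((i + 1) % (w :: l).length) 0 hmodlt (by simp) h0]
    exact hR
  · have hlt' : i + 1 < (w :: l).length := by simpa using hlt
    have hk2 : i + 1 < (w :: (l ++ [w])).length := by omega
    have hR := hfull i hk2
    rw [key i hi' (by omega), key (i+1) (by omega) hk2] at hR
    rw [gcongr ((i + 1) % (w :: l).length) (i+1) hmodlt hlt' (Nat.mod_eq_of_lt hlt')]
    exact hR

private def stepRel (M : Fin m → Fin n → Bool) (D : Fin m → Fin n → Option Bool) :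
    (Fin m ⊕ Fin n) → (Fin m ⊕ Fin n) → Prop := fun u v =>
  match u, v with
  | Sum.inl i, Sum.inr j => M i j = true ∧ D i j = none
  | Sum.inr j, Sum.inl i => M i j = false ∧ D i j = none
  | _, _ => False

private lemma no_cycle {s : Fin m → ℕ} {t : Fin n → ℕ} {M : Fin m → Fin n → Bool}
    {D : Fin m → Fin n → Option Bool} (hdef : IsDefiningSet s t D M) :
    ∀ v, ¬ Relation.TransGen (stepRel M D) v v := by
  classical
  intro v hv
  obtain ⟨w, l, hchain, hnd⟩ := exists_nodup_cycle' hv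
  set cyc : List (Fin m ⊕ Fin n) := w :: l with hcyc
  set π := cyc.formPerm with hπdef
  have hstep : ∀ u ∈ cyc, stepRel M D u (π u) := cycle_formPerm_step hchain hnd
  have hmem : ∀ u ∈ cyc, π u ∈ cyc := fun u hu => List.formPerm_apply_mem_of_mem hu
  have hsymm_mem : ∀ u ∈ cyc, π.symm u ∈ cyc := by
    intro u hu
    by_contra hns
    have h1 : π (π.symm u) = π.symm u := List.formPerm_apply_of_notMem hns
    rw [Equiv.apply_symm_apply] at h1
    exact hns (h1 ▸ hu)
  have hstep_symm : ∀ u ∈ cyc, stepRel M D (π.symm u) u := by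
    intro u hu
    have h1 := hstep _ (hsymm_mem u hu)
    rwa [Equiv.apply_symm_apply] at h1
  have hfix : ∀ u, u ∉ cyc → π u = u := fun u hu => List.formPerm_apply_of_notMem hu
  have hC1 : ∀ (i : Fin m) (j : Fin n), π (Sum.inl i) = Sum.inr j → Sum.inl i ∈ cyc := by
    intro i j h
    by_contra hc
    rw [hfix _ hc] at h
    cases h
  have hC2 : ∀ (i : Fin m) (j : Fin n), π (Sum.inr j) = Sum.inl i → Sum.inr j ∈ cyc := by
    intro i j h
    by_contra hc
    rw [hfix _ hc] at h
    cases h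
  set M' : Fin m → Fin n → Bool := fun i j =>
    if π (Sum.inl i) = (Sum.inr j : Fin m ⊕ Fin n) ∨
       π (Sum.inr j) = (Sum.inl i : Fin m ⊕ Fin n) then !M i j else M i j with hM'def
  have rowdata : ∀ i : Fin m, Sum.inl i ∈ cyc →
      ∃ j₁ j₂ : Fin n, π (Sum.inl i) = Sum.inr j₁ ∧ Sum.inr j₂ ∈ cyc ∧
        π (Sum.inr j₂) = Sum.inl i ∧ M i j₁ = true ∧ M i j₂ = false := by
    intro i hi
    have h1 := hstep _ hi
    have h2 := hstep_symm _ hi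
    have h2m := hsymm_mem _ hi
    rcases hu1 : π (Sum.inl i) with i' | j₁
    · rw [hu1] at h1; exact absurd h1 (by simp [stepRel])
    · rcases hu2 : π.symm (Sum.inl i) with i'' | j₂
      · rw [hu2] at h2; exact absurd h2 (by simp [stepRel])
      · rw [hu1] at h1
        rw [hu2] at h2 h2m
        refine ⟨j₁, j₂, rfl, h2m, ?_, h1.1, h2.1⟩
        rw [← hu2, Equiv.apply_symm_apply]
  have coldata : ∀ j : Fin n, Sum.inr j ∈ cyc →
      ∃ i₁ i₂ : Fin m, π (Sum.inr j) = Sum.inl i₁ ∧ Sum.inl i₂ ∈ cyc ∧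
        π (Sum.inl i₂) = Sum.inr j ∧ M i₁ j = false ∧ M i₂ j = true := by
    intro j hj
    have h1 := hstep _ hj
    have h2 := hstep_symm _ hj
    have h2m := hsymm_mem _ hj
    rcases hu1 : π (Sum.inr j) with i₁ | j'
    · rcases hu2 : π.symm (Sum.inr j) with i₂ | j''
      · rw [hu1] at h1
        rw [hu2] at h2 h2m
        refine ⟨i₁, i₂, rfl, h2m, ?_, h1.1, h2.1⟩
        rw [← hu2, Equiv.apply_symm_apply]
      · rw [hu2] at h2; exact absurd h2 (by simp [stepRel])
    · rw [hu1] at h1; exact absurd h1 (by simp [stepRel])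
  have hrow : ∀ i, rowSum M' i = rowSum M i := by
    intro i
    rcases Classical.em (Sum.inl i ∈ cyc) with hi | hi
    · obtain ⟨j₁, j₂, hj₁, hj₂mem, hj₂, hM1, hM2⟩ := rowdata i hi
      have hne : j₁ ≠ j₂ := by
        intro h; rw [h, hM2] at hM1; exact Bool.noConfusion hM1
      have hv1 : M' i j₁ = false := by
        simp only [hM'def]
        rw [if_pos (Or.inl hj₁), hM1]; rfl
      have hv2 : M' i j₂ = true := by
        simp only [hM'def]
        rw [if_pos (Or.inr hj₂), hM2]; rfl
      have hvother : ∀ j, j ≠ j₁ → j ≠ j₂ → M' i j = M i j := by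
        intro j h1 h2
        simp only [hM'def]
        apply if_neg
        rintro (h | h)
        · rw [hj₁] at h; exact h1 (Sum.inr.inj h).symm
        · apply h2
          have e1 : π.symm (Sum.inl i) = Sum.inr j := by rw [← h, Equiv.symm_apply_apply]
          have e2 : π.symm (Sum.inl i) = Sum.inr j₂ := by rw [← hj₂, Equiv.symm_apply_apply]
          rw [e1] at e2
          exact (Sum.inr.inj e2)
      have hj1mem : j₁ ∈ univ.filter (fun j => M i j = true) := by simp [hM1]
      have hset : univ.filter (fun j => M' i j = true) =
          insert j₂ ((univ.filter (fun j => M i j = true)).erase j₁) := by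
        ext j
        simp only [mem_insert, mem_erase, mem_filter, mem_univ, true_and]
        by_cases e2 : j = j₂
        · subst e2; simp [hv2]
        · by_cases e1 : j = j₁
          · subst e1; simp [hv1, e2]
          · rw [hvother j e1 e2]; simp [e1, e2]
      unfold rowSum
      rw [hset, Finset.card_insert_of_notMem, Finset.card_erase_of_mem hj1mem]
      · exact Nat.sub_add_cancel (Finset.card_pos.mpr ⟨j₁, hj1mem⟩)
      · intro hc
        have := (Finset.mem_erase.1 hc).2
        rw [Finset.mem_filter] at this
        rw [hM2] at this
        exact Bool.noConfusion this.2
    · have hall : ∀ j, M' i j = M i j := by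
        intro j
        simp only [hM'def]
        apply if_neg
        rintro (h | h)
        · exact hi (hC1 _ _ h)
        · exact hi (h ▸ hmem _ (hC2 _ _ h))
      unfold rowSum
      congr 1
      apply Finset.filter_congr
      intro j _
      rw [hall j]
  have hcol : ∀ j, colSum M' j = colSum M j := by
    intro j
    rcases Classical.em (Sum.inr j ∈ cyc) with hj | hj
    · obtain ⟨i₁, i₂, hi₁, hi₂mem, hi₂, hM1, hM2⟩ := coldata j hj
      have hne : i₁ ≠ i₂ := by
        intro h; rw [h, hM2] at hM1; exact Bool.noConfusion hM1
      have hv1 : M' i₁ j = true := by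
        simp only [hM'def]
        rw [if_pos (Or.inr hi₁), hM1]; rfl
      have hv2 : M' i₂ j = false := by
        simp only [hM'def]
        rw [if_pos (Or.inl hi₂), hM2]; rfl
      have hvother : ∀ i, i ≠ i₁ → i ≠ i₂ → M' i j = M i j := by
        intro i h1 h2
        simp only [hM'def]
        apply if_neg
        rintro (h | h)
        · apply h2
          have e1 : π.symm (Sum.inr j) = Sum.inl i := by rw [← h, Equiv.symm_apply_apply]
          have e2 : π.symm (Sum.inr j) = Sum.inl i₂ := by rw [← hi₂, Equiv.symm_apply_apply]
          rw [e1] at e2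
          exact (Sum.inl.inj e2)
        · rw [hi₁] at h; exact h1 (Sum.inl.inj h).symm
      have hi2mem' : i₂ ∈ univ.filter (fun i => M i j = true) := by simp [hM2]
      have hset : univ.filter (fun i => M' i j = true) =
          insert i₁ ((univ.filter (fun i => M i j = true)).erase i₂) := by
        ext i
        simp only [mem_insert, mem_erase, mem_filter, mem_univ, true_and]
        by_cases e1 : i = i₁
        · subst e1; simp [hv1]
        · by_cases e2 : i = i₂
          · subst e2; simp [hv2, e1]
          · rw [hvother i e1 e2]; simp [e1, e2]
      unfold colSum
      rw [hset, Finset.card_insert_of_notMem, Finset.card_erase_of_mem hi2mem']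
      · exact Nat.sub_add_cancel (Finset.card_pos.mpr ⟨i₂, hi2mem'⟩)
      · intro hc
        have := (Finset.mem_erase.1 hc).2
        rw [Finset.mem_filter] at this
        rw [hM1] at this
        exact Bool.noConfusion this.2
    · have hall : ∀ i, M' i j = M i j := by
        intro i
        simp only [hM'def]
        apply if_neg
        rintro (h | h)
        · exact hj (h ▸ hmem _ (hC1 _ _ h))
        · exact hj (hC2 _ _ h)
      unfold colSum
      congr 1
      apply Finset.filter_congr
      intro i _
      rw [hall i]
  have hclass' : inClass s t M' :=
    ⟨fun i => by rw [hrow i]; exact hdef.1.1 i, fun j => by rw [hcol j]; exact hdef.1.2 j⟩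
  have hcont' : containedIn D M' := by
    intro i j b hb
    have heq : M' i j = M i j := by
      simp only [hM'def]
      apply if_neg
      rintro (h | h)
      · have h1 := hstep _ (hC1 _ _ h)
        rw [h] at h1
        rw [h1.2] at hb
        cases hb
      · have h1 := hstep _ (hC2 _ _ h)
        rw [h] at h1
        rw [h1.2] at hb
        cases hb
    rw [heq]
    exact hdef.2.1 i j b hb
  have hMM : M' = M := hdef.2.2 M' hclass' hcont'
  have hwmem : w ∈ cyc := List.mem_cons_self
  rcases hwc : w with i | j
  · rw [hwc] at hwmem
    obtain ⟨j₁, j₂, hj₁, _, _, hM1, _⟩ := rowdata i hwmem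
    have hv1 : M' i j₁ = false := by
      simp only [hM'def]
      rw [if_pos (Or.inl hj₁), hM1]; rfl
    rw [hMM, hM1] at hv1
    exact Bool.noConfusion hv1
  · rw [hwc] at hwmem
    obtain ⟨i₁, i₂, hi₁, _, _, hM1, _⟩ := coldata j hwmem
    have hv1 : M' i₁ j = true := by
      simp only [hM'def]
      rw [if_pos (Or.inr hi₁), hM1]; rfl
    rw [hMM, hM1] at hv1
    exact Bool.noConfusion hv1

private lemma exists_valuation {s : Fin m → ℕ} {t : Fin n → ℕ} {M : Fin m → Fin n → Bool}
    {D : Fin m → Fin n → Option Bool} (hdef : IsDefiningSet s t D M) :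
    ∃ (x : Fin m → ℕ) (y : Fin n → ℕ),
      (∀ i j, M i j = true → D i j = none → x i < y j) ∧
      (∀ i j, M i j = false → D i j = none → y j < x i) := by
  classical
  set R := stepRel M D with hR
  set ρ : (Fin m ⊕ Fin n) → ℕ :=
    fun v => (univ.filter fun u => Relation.TransGen R u v).card with hρ
  have hmono : ∀ u v, R u v → ρ u < ρ v := by
    intro u v huv
    apply Finset.card_lt_card
    constructor
    · intro z hz
      simp only [mem_filter, mem_univ, true_and] at hz ⊢
      exact hz.tail huv
    · intro hts
      have hu : u ∈ univ.filter (fun z => Relation.TransGen R z v) := by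
        simp only [mem_filter, mem_univ, true_and]
        exact Relation.TransGen.single huv
      have := hts hu
      simp only [mem_filter, mem_univ, true_and] at this
      exact no_cycle hdef u this
  exact ⟨fun i => ρ (Sum.inl i), fun j => ρ (Sum.inr j),
    fun i j h1 h2 => hmono _ _ (show stepRel M D (Sum.inl i) (Sum.inr j) from ⟨h1, h2⟩),
    fun i j h1 h2 => hmono _ _ (show stepRel M D (Sum.inr j) (Sum.inl i) from ⟨h1, h2⟩)⟩

end NoCycle

private lemma card_prod_filter {α β : Type*} (R : Finset α) (C : Finset β) (P : α → β → Prop)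
    [∀ a b, Decidable (P a b)] :
    ((R ×ˢ C).filter fun p => P p.1 p.2).card = ∑ i ∈ R, (C.filter fun j => P i j).card := by
  rw [Finset.card_filter, Finset.sum_product]
  exact Finset.sum_congr rfl fun i _ => (Finset.card_filter _ _).symm


set_option maxHeartbeats 1000000

/-- Lemma 2 of the paper: if the number of ones in every subarray of `M` is within `Δ` of its
expectation `λ|R||C|`, then every defining set for `M` has size at least
`λmn - C₀(m^{7/4} + m^{1/4}Δ + n·m^{3/4})`, for a constant `C₀` depending only on a
lower bound `ε'` for the density `λ ≤ 1/2`, assuming `n ≤ m`. -/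
theorem defining_set_lower_bound (ε' : ℝ) (hε' : 0 < ε') :
    ∃ C₀ : ℝ, 0 < C₀ ∧
      ∀ (m n : ℕ) (s : Fin m → ℕ) (t : Fin n → ℕ) (M : Fin m → Fin n → Bool)
        (lam Δ : ℝ) (D : Fin m → Fin n → Option Bool),
        n ≤ m → inClass s t M →
        lam = (onesCount M : ℝ) / (m * n) →
        ε' ≤ lam → lam ≤ 1 / 2 → 0 ≤ Δ →
        (∀ (R : Finset (Fin m)) (C : Finset (Fin n)),
          |(((R ×ˢ C).filter fun p : Fin m × Fin n => M p.1 p.2 = true).card : ℝ) -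
              lam * R.card * C.card| ≤ Δ) →
        IsDefiningSet s t D M →
        lam * m * n -
            C₀ * ((m : ℝ) ^ ((7 : ℝ) / 4) + (m : ℝ) ^ ((1 : ℝ) / 4) * Δ +
              (n : ℝ) * (m : ℝ) ^ ((3 : ℝ) / 4)) ≤ (psize D : ℝ) := by
    classical
  refine ⟨6, by norm_num, ?_⟩
  intro m n s t M lam Δ D hnm hclass hlam hεlam hlam2 hΔ0 hΔ hdef
  have hm : 0 < m := by
    rcases Nat.eq_zero_or_pos m with h0 | h
    · exfalso
      have hm0 : (m:ℝ) = 0 := by exact_mod_cast h0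
      rw [hm0] at hlam
      simp at hlam
      rw [hlam] at hεlam
      linarith
    · exact h
  have hn : 0 < n := by
    rcases Nat.eq_zero_or_pos n with h0 | h
    · exfalso
      have hn0 : (n:ℝ) = 0 := by exact_mod_cast h0
      rw [hn0] at hlam
      simp at hlam
      rw [hlam] at hεlam
      linarith
    · exact h
  have hlam0 : 0 < lam := lt_of_lt_of_le hε' hεlam
  have hmR : (0:ℝ) < m := by exact_mod_cast hm
  obtain ⟨x, y, Hone, Hzero⟩ := exists_valuation hdef
  set A : Fin m → Finset (Fin n) := fun i => univ.filter (fun j => y j ≤ x i) with hA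
  set a : Fin m → ℕ := fun i => (A i).card with ha
  set ro : Fin m → ℕ := fun i => (univ.filter (fun j => M i j = true)).card with hro
  set u1 : Fin m → ℕ := fun i => (univ.filter (fun j => y j ≤ x i ∧ M i j = true)).card with hu1
  set u0 : Fin m → ℕ := fun i => (univ.filter (fun j => ¬ (y j ≤ x i) ∧ M i j = false)).card with hu0
  have han : ∀ i, a i ≤ n := by
    intro i
    calc a i ≤ (univ : Finset (Fin n)).card := Finset.card_filter_le _ _
    _ = n := by simp
  have hcell : ∀ (i : Fin m) (j : Fin n),
      ((y j ≤ x i ∧ M i j = true) ∨ (¬(y j ≤ x i) ∧ M i j = false)) → (D i j).isSome = true := by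
    intro i j h
    cases hD : D i j with
    | some b => rfl
    | none =>
      exfalso
      rcases h with ⟨hle, hM⟩ | ⟨hlt, hM⟩
      · exact absurd (Hone i j hM hD) (not_lt.2 hle)
      · exact hlt (le_of_lt (Hzero i j hM hD))
  have hsplit : ∀ i, (univ.filter fun j =>
      (y j ≤ x i ∧ M i j = true) ∨ (¬(y j ≤ x i) ∧ M i j = false)).card = u1 i + u0 i := by
    intro i
    rw [Finset.filter_or, Finset.card_union_of_disjoint]
    rw [Finset.disjoint_left]
    intro j hj1 hj2
    simp only [Finset.mem_filter] at hj1 hj2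
    exact hj2.2.1 hj1.2.1
  have hpsize : ∑ i, (u1 i + u0 i) ≤ psize D := by
    have h1 : ∑ i, (u1 i + u0 i) = ((univ ×ˢ univ).filter fun p : Fin m × Fin n =>
        (y p.2 ≤ x p.1 ∧ M p.1 p.2 = true) ∨ (¬(y p.2 ≤ x p.1) ∧ M p.1 p.2 = false)).card := by
      have e := card_prod_filter (univ : Finset (Fin m)) (univ : Finset (Fin n))
        (fun i j => (y j ≤ x i ∧ M i j = true) ∨ (¬(y j ≤ x i) ∧ M i j = false))
      rw [e]
      exact (Finset.sum_congr rfl fun i _ => (hsplit i).symm)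
    rw [h1]
    unfold psize
    rw [Finset.univ_product_univ]
    apply Finset.card_le_card
    intro p hp
    simp only [Finset.mem_filter, Finset.mem_univ, true_and] at hp ⊢
    exact hcell p.1 p.2 hp
  have hrowid : ∀ i, (u0 i : ℝ) = (n : ℝ) - a i - ro i + u1 i := by
    intro i
    have e1 : (univ.filter fun j => (y j ≤ x i) ∨ M i j = true).card + u1 i = a i + ro i := by
      simp only [hu1, ha, hA, hro]
      rw [Finset.filter_or, Finset.filter_and]
      exact Finset.card_union_add_card_inter _ _
    have e2 : (univ.filter fun j => (y j ≤ x i) ∨ M i j = true).card + u0 i = n := by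
      have hnot : (univ.filter fun j => ¬((y j ≤ x i) ∨ M i j = true)) =
          (univ.filter fun j => ¬(y j ≤ x i) ∧ M i j = false) := by
        apply Finset.filter_congr
        intro j _
        simp [not_or]
      have h3 := Finset.card_filter_add_card_filter_not
        (s := (univ : Finset (Fin n))) (p := fun j => (y j ≤ x i) ∨ M i j = true)
      rw [hnot] at h3
      simp only [Finset.card_univ, Fintype.card_fin] at h3
      simp only [hu0]
      exact h3
    have r1 : ((univ.filter fun j => (y j ≤ x i) ∨ M i j = true).card : ℝ) + u1 i = a i + ro i := by
      exact_mod_cast e1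
    have r2 : ((univ.filter fun j => (y j ≤ x i) ∨ M i j = true).card : ℝ) + u0 i = n := by
      exact_mod_cast e2
    linarith
  -- grouping
  set K : ℕ := ⌊(m:ℝ) ^ ((1:ℝ)/4)⌋₊ with hK
  have hm14 : (1:ℝ) ≤ (m:ℝ) ^ ((1:ℝ)/4) := by
    have h1 : ((1:ℝ)) ^ ((1:ℝ)/4) ≤ (m:ℝ) ^ ((1:ℝ)/4) :=
      Real.rpow_le_rpow (by norm_num) (by exact_mod_cast hm) (by norm_num)
    simpa using h1
  have hK1 : 1 ≤ K := Nat.le_floor (by simpa using hm14)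
  have hK1R : (1:ℝ) ≤ K := by exact_mod_cast hK1
  have hKpos : (0:ℝ) < K := by linarith
  set L : ℕ := n / K + 1 with hL
  have hL1 : 1 ≤ L := by rw [hL]; exact Nat.le_add_left 1 _
  have hLpos : 0 < L := hL1
  set g : Fin m → ℕ := fun i => a i / L with hg
  set F : ℕ := (univ.image g).card with hF
  have hfib : ∑ k ∈ univ.image g, ∑ i ∈ univ.filter (fun i => g i = k), ((u1 i : ℝ) + u0 i)
      = ∑ i, ((u1 i : ℝ) + u0 i) :=
    Finset.sum_fiberwise_of_maps_to (fun i _ => Finset.mem_image_of_mem g (Finset.mem_univ i)) _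
  have hfiber : ∀ k ∈ univ.image g,
      lam * n * ((univ.filter fun i => g i = k).card : ℝ)
        - ((L:ℝ) - 1) * ((univ.filter fun i => g i = k).card : ℝ) - 3 * Δ
      ≤ ∑ i ∈ univ.filter (fun i => g i = k), ((u1 i : ℝ) + u0 i) := by
    intro k hk
    set G := univ.filter (fun i => g i = k) with hG
    have hGne : G.Nonempty := by
      obtain ⟨i, _, hgi⟩ := Finset.mem_image.1 hk
      exact ⟨i, by simp [hG, hgi]⟩
    obtain ⟨i₀, hi₀G, hi₀min⟩ := Finset.exists_min_image G x hGne
    have hsub : ∀ i ∈ G, (A i₀) ⊆ (A i) := by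
      intro i hi j hj
      simp only [hA, Finset.mem_filter, Finset.mem_univ, true_and] at hj ⊢
      exact le_trans hj (hi₀min i hi)
    have haiB : ∀ i ∈ G, (a i : ℝ) ≤ (a i₀ : ℝ) + ((L:ℝ) - 1) := by
      intro i hi
      have hgi : a i / L = k := by simpa [hG, hg] using (Finset.mem_filter.1 hi).2
      have hgi₀ : a i₀ / L = k := by simpa [hG, hg] using (Finset.mem_filter.1 hi₀G).2
      have hgi' : a i / L = a i₀ / L := by rw [hgi, hgi₀]
      have e2 : a i < L * (a i / L) + L := by
        conv_lhs => rw [← Nat.div_add_mod (a i) L]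
        exact Nat.add_lt_add_left (Nat.mod_lt _ hLpos) _
      rw [hgi'] at e2
      have e1 : a i₀ / L * L ≤ a i₀ := Nat.div_mul_le_self _ _
      rw [Nat.mul_comm] at e2
      have h3 : a i + 1 ≤ a i₀ + L := by omega
      have h4 : (1:ℝ) ≤ (L:ℝ) := by exact_mod_cast hL1
      have h5 : ((a i : ℕ) : ℝ) + 1 ≤ ((a i₀ : ℕ) : ℝ) + L := by exact_mod_cast h3
      linarith
    have hd1 := abs_le.1 (hΔ G (A i₀))
    have hs1 : (((G ×ˢ (A i₀)).filter fun p => M p.1 p.2 = true).card : ℝ)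
        = ∑ i ∈ G, (((A i₀).filter fun j => M i j = true).card : ℝ) := by
      have e := card_prod_filter G (A i₀) (fun i j => M i j = true)
      rw [e]
      push_cast
      rfl
    have hc0 : ((A i₀).card : ℝ) = (a i₀ : ℝ) := rfl
    have hSB : lam * G.card * (a i₀ : ℝ) - Δ
        ≤ ∑ i ∈ G, (((A i₀).filter fun j => M i j = true).card : ℝ) := by
      have h6 := hd1.1
      rw [hs1] at h6
      rw [hc0] at h6
      linarith
    have hu1B : ∀ i ∈ G, (((A i₀).filter fun j => M i j = true).card : ℝ) ≤ (u1 i : ℝ) := by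
      intro i hi
      have hsub2 : (A i₀).filter (fun j => M i j = true)
          ⊆ univ.filter (fun j => y j ≤ x i ∧ M i j = true) := by
        intro j hj
        rcases Finset.mem_filter.1 hj with ⟨hjB, hjM⟩
        have hjc := hsub i hi hjB
        simp only [hA, Finset.mem_filter, Finset.mem_univ, true_and] at hjc ⊢
        exact ⟨hjc, hjM⟩
      have : ((A i₀).filter (fun j => M i j = true)).card
          ≤ (univ.filter (fun j => y j ≤ x i ∧ M i j = true)).card := Finset.card_le_card hsub2
      exact_mod_cast this
    have hd2 := abs_le.1 (hΔ G univ)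
    have hs2 : (((G ×ˢ (univ : Finset (Fin n))).filter fun p => M p.1 p.2 = true).card : ℝ)
        = ∑ i ∈ G, (ro i : ℝ) := by
      have e := card_prod_filter G (univ : Finset (Fin n)) (fun i j => M i j = true)
      rw [e]
      push_cast
      rfl
    have hSR : ∑ i ∈ G, (ro i : ℝ) ≤ lam * G.card * n + Δ := by
      have h7 := hd2.2
      rw [hs2] at h7
      simp only [Finset.card_univ, Fintype.card_fin] at h7
      linarith
    have hpt : ∀ i ∈ G, lam * n - ((L:ℝ) - 1)
        ≤ ((n:ℝ) - a i) - lam * n + 2 * (lam * ((a i : ℝ) + 1 - L)) := by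
      intro i _
      have h1 : (a i : ℝ) ≤ n := by exact_mod_cast han i
      have h2 : (0:ℝ) ≤ 1 - 2 * lam := by linarith
      have h3 : (1:ℝ) ≤ L := by exact_mod_cast hL1
      nlinarith [mul_nonneg h2 (sub_nonneg.2 h1), mul_nonneg (sub_nonneg.2 h3) h2]
    have hrw : ∑ i ∈ G, ((u1 i : ℝ) + u0 i) = (∑ i ∈ G, ((n:ℝ) - a i)) - (∑ i ∈ G, (ro i:ℝ))
        + 2 * ∑ i ∈ G, (u1 i : ℝ) := by
      rw [Finset.mul_sum, ← Finset.sum_sub_distrib, ← Finset.sum_add_distrib]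
      apply Finset.sum_congr rfl
      intro i _
      have h8 := hrowid i
      linarith
    have hSU : ∑ i ∈ G, (((A i₀).filter fun j => M i j = true).card : ℝ) ≤ ∑ i ∈ G, (u1 i : ℝ) :=
      Finset.sum_le_sum hu1B
    have hSBa : ∑ i ∈ G, (lam * ((a i : ℝ) + 1 - L)) ≤ lam * G.card * (a i₀ : ℝ) := by
      have h1 : ∀ i ∈ G, lam * ((a i:ℝ) + 1 - L) ≤ lam * (a i₀ : ℝ) := by
        intro i hi
        apply mul_le_mul_of_nonneg_left _ (le_of_lt hlam0)
        have h9 := haiB i hi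
        linarith
      calc ∑ i ∈ G, (lam * ((a i : ℝ) + 1 - L)) ≤ ∑ _i ∈ G, lam * (a i₀:ℝ) :=
            Finset.sum_le_sum h1
      _ = lam * G.card * (a i₀ : ℝ) := by rw [Finset.sum_const, nsmul_eq_mul]; ring
    have hptsum : ((G.card : ℝ)) * (lam * n - ((L:ℝ)-1))
        ≤ (∑ i ∈ G, ((n:ℝ) - a i)) - lam * G.card * n
          + 2 * ∑ i ∈ G, (lam * ((a i : ℝ) + 1 - L)) := by
      have h1 := Finset.sum_le_sum hpt
      rw [Finset.sum_const, nsmul_eq_mul] at h1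
      have h2 : ∑ i ∈ G, (((n:ℝ) - a i) - lam * n + 2 * (lam * ((a i : ℝ) + 1 - L)))
          = (∑ i ∈ G, ((n:ℝ) - a i)) - lam * G.card * n
            + 2 * ∑ i ∈ G, (lam * ((a i : ℝ) + 1 - L)) := by
        rw [Finset.sum_add_distrib, Finset.sum_sub_distrib, ← Finset.mul_sum,
          Finset.sum_const, nsmul_eq_mul, ← Finset.mul_sum]
        ring
      rw [h2] at h1
      exact h1
    rw [hrw]
    linarith [hSB, hSR, hSU, hSBa, hptsum]
  have hsumcards : ∑ k ∈ univ.image g, ((univ.filter fun i => g i = k).card : ℝ) = m := by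
    have h := Finset.sum_fiberwise_of_maps_to
      (fun i (_ : i ∈ (univ : Finset (Fin m))) =>
        Finset.mem_image_of_mem g (Finset.mem_univ i)) (fun _ => (1:ℝ))
    simpa [Finset.sum_const, nsmul_eq_mul, Finset.card_univ] using h
  have htot : lam * n * m - ((L:ℝ) - 1) * m - 3 * Δ * F ≤ ∑ i, ((u1 i : ℝ) + u0 i) := by
    rw [← hfib]
    have h1 := Finset.sum_le_sum hfiber
    have h2 : ∑ k ∈ univ.image g, (lam * n * ((univ.filter fun i => g i = k).card : ℝ)
        - ((L:ℝ) - 1) * ((univ.filter fun i => g i = k).card : ℝ) - 3 * Δ)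
        = lam * n * m - ((L:ℝ)-1) * m - 3 * Δ * F := by
      rw [Finset.sum_sub_distrib, Finset.sum_sub_distrib, ← Finset.mul_sum, ← Finset.mul_sum,
        hsumcards, Finset.sum_const, nsmul_eq_mul, hF]
      ring
    rw [h2] at h1
    exact h1
  have hpsizeR : ∑ i, ((u1 i : ℝ) + u0 i) ≤ (psize D : ℝ) := by
    have h1 : ((∑ i, (u1 i + u0 i) : ℕ) : ℝ) ≤ (psize D : ℝ) := by exact_mod_cast hpsize
    push_cast at h1
    exact h1
  have hKle : (K:ℝ) ≤ (m:ℝ) ^ ((1:ℝ)/4) := Nat.floor_le (by positivity)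
  have hKge : (m:ℝ) ^ ((1:ℝ)/4) ≤ 2 * K := by
    have h1 := Nat.lt_floor_add_one ((m:ℝ) ^ ((1:ℝ)/4))
    rw [← hK] at h1
    linarith
  have hrpow_mul : (m:ℝ) ^ ((3:ℝ)/4) * (m:ℝ) ^ ((1:ℝ)/4) = m := by
    rw [← Real.rpow_add hmR]
    norm_num
  have hm34 : (m:ℝ) ≤ 2 * K * (m:ℝ) ^ ((3:ℝ)/4) := by
    calc (m:ℝ) = (m:ℝ) ^ ((3:ℝ)/4) * (m:ℝ) ^ ((1:ℝ)/4) := hrpow_mul.symm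
    _ ≤ (m:ℝ) ^ ((3:ℝ)/4) * (2 * K) := by
        apply mul_le_mul_of_nonneg_left hKge (by positivity)
    _ = 2 * K * (m:ℝ) ^ ((3:ℝ)/4) := by ring
  have hLm : ((L:ℝ) - 1) * m ≤ 2 * n * (m:ℝ) ^ ((3:ℝ)/4) := by
    have h1 : ((L:ℝ) - 1) = ((n / K : ℕ) : ℝ) := by rw [hL]; push_cast; ring
    have h2 : ((n / K : ℕ) : ℝ) ≤ (n:ℝ) / K := Nat.cast_div_le
    have hn0 : (0:ℝ) ≤ n := by positivity
    have h3 : (n:ℝ)/K * m ≤ 2 * n * (m:ℝ)^((3:ℝ)/4) := by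
      rw [div_mul_eq_mul_div, div_le_iff₀ hKpos]
      have h4 := mul_le_mul_of_nonneg_left hm34 hn0
      linarith
    calc ((L:ℝ)-1) * m = ((n/K : ℕ):ℝ) * m := by rw [h1]
    _ ≤ (n:ℝ)/K * m := by apply mul_le_mul_of_nonneg_right h2 (by positivity)
    _ ≤ _ := h3
  have hnL : n / L ≤ K := by
    have h3 : n + 1 ≤ K * L := by
      have hd := Nat.div_add_mod n K
      have hmod : n % K < K := Nat.mod_lt _ (by omega)
      have he : K * L = K * (n / K) + K := by rw [hL]; ring
      omega
    have h2 : n < (K+1) * L := by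
      have he2 : (K+1) * L = K * L + L := by ring
      omega
    exact Nat.lt_succ_iff.1 ((Nat.div_lt_iff_lt_mul (by omega)).2 h2)
  have hFK : F ≤ K + 1 := by
    rw [hF]
    calc (univ.image g).card ≤ (Finset.range (K+1)).card := by
          apply Finset.card_le_card
          intro k hk
          obtain ⟨i, _, rfl⟩ := Finset.mem_image.1 hk
          rw [Finset.mem_range, Nat.lt_succ_iff]
          calc g i = a i / L := rfl
          _ ≤ n / L := Nat.div_le_div_right (han i)
          _ ≤ K := hnL
    _ = K + 1 := Finset.card_range _
  have hFR : (F:ℝ) ≤ 2 * (m:ℝ)^((1:ℝ)/4) := by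
    have h1 : (F:ℝ) ≤ (K:ℝ) + 1 := by exact_mod_cast hFK
    linarith [hKle]
  have h74 : (0:ℝ) ≤ (m:ℝ)^((7:ℝ)/4) := by positivity
  have hnm34 : (0:ℝ) ≤ (n:ℝ) * (m:ℝ)^((3:ℝ)/4) := by positivity
  have hfinal : ((L:ℝ)-1)*m + 3*Δ*F
      ≤ 6 * ((m:ℝ)^((7:ℝ)/4) + (m:ℝ)^((1:ℝ)/4)*Δ + (n:ℝ) * (m:ℝ)^((3:ℝ)/4)) := by
    have h1 : 3*Δ*F ≤ 6 * ((m:ℝ)^((1:ℝ)/4)*Δ) := by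
      have h5 := mul_le_mul_of_nonneg_left hFR (by linarith : (0:ℝ) ≤ 3 * Δ)
      linarith
    linarith [hLm, h1, h74, hnm34]
  have hF0 : (0:ℝ) ≤ F := by positivity
  linarith [htot, hpsizeR, hfinal]
end

section
/- Let D be a minimal defining set for M ∈ 𝒜(s,t), arranged so M∖D is in good form with South-East walk 𝒲. Then D must contain every cell of M below 𝒲 whose entry is 0, and every cell of M above 𝒲 whose entry is 1. Consequently |D| = α₁ + β₀, where α₁ is the number of ones of M above 𝒲 and β₀ is the number of zeros of M below 𝒲. -/
open Finset

lemma exists_mem_sdiff_of_card_eq {α : Type*} [DecidableEq α] {A B : Finset α}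
    (h : A.card = B.card) {x : α} (hxB : x ∈ B) (hxA : x ∉ A) :
    ∃ y, y ∈ A ∧ y ∉ B := by
  by_contra hc
  push_neg at hc
  have hAB : A = B := Finset.eq_of_subset_of_card_le (fun y hy => hc y hy) h.ge
  exact hxA (hAB ▸ hxB)

lemma card_split {α : Type*} [Fintype α] (p q : α → Prop) [DecidablePred p] [DecidablePred q] :
    (univ.filter p).card
      = (univ.filter fun a => p a ∧ q a).card + (univ.filter fun a => p a ∧ ¬ q a).card := by
  have := Finset.card_filter_add_card_filter_not (s := univ.filter p) (p := q)
  simp only [Finset.filter_filter] at this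
  omega

lemma forced {m n : ℕ} (s : Fin m → ℕ) (t : Fin n → ℕ) (f : Fin m → ℕ) (hf : Monotone f)
    (E : Fin m → Fin n → Option Bool) (M M' : Fin m → Fin n → Bool)
    (hM : inClass s t M) (hM' : inClass s t M')
    (hagree : ∀ i j, (E i j).isSome → M' i j = M i j)
    (hb : ∀ i j, E i j = none → (j : ℕ) < f i → M i j = true)
    (ha : ∀ i j, E i j = none → f i ≤ (j : ℕ) → M i j = false) :
    M' = M := by
  classical
  have hrow : ∀ i, (univ.filter fun j => M' i j = true ∧ E i j = none).card
      = (univ.filter fun j => M i j = true ∧ E i j = none).card := by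
    intro i
    have h1 : (univ.filter fun j => M' i j = true).card
        = (univ.filter fun j => M i j = true).card := by
      have e1 := hM'.1 i; have e2 := hM.1 i
      unfold rowSum at e1 e2; omega
    have s1 := card_split (fun j => M' i j = true) (fun j => E i j = none)
    have s2 := card_split (fun j => M i j = true) (fun j => E i j = none)
    have hfilled : (univ.filter fun j => M' i j = true ∧ ¬ E i j = none)
        = (univ.filter fun j => M i j = true ∧ ¬ E i j = none) := by
      apply Finset.filter_congr
      intro j _
      by_cases hE : E i j = none
      · simp [hE]
      · have := hagree i j (Option.isSome_iff_ne_none.mpr hE)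
        simp [hE, this]
    rw [hfilled] at s1
    omega
  have hcol : ∀ j, (univ.filter fun i => M' i j = true ∧ E i j = none).card
      = (univ.filter fun i => M i j = true ∧ E i j = none).card := by
    intro j
    have h1 : (univ.filter fun i => M' i j = true).card
        = (univ.filter fun i => M i j = true).card := by
      have e1 := hM'.2 j; have e2 := hM.2 j
      unfold colSum at e1 e2; omega
    have s1 := card_split (fun i => M' i j = true) (fun i => E i j = none)
    have s2 := card_split (fun i => M i j = true) (fun i => E i j = none)
    have hfilled : (univ.filter fun i => M' i j = true ∧ ¬ E i j = none)
        = (univ.filter fun i => M i j = true ∧ ¬ E i j = none) := by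
      apply Finset.filter_congr
      intro i _
      by_cases hE : E i j = none
      · simp [hE]
      · have := hagree i j (Option.isSome_iff_ne_none.mpr hE)
        simp [hE, this]
    rw [hfilled] at s1
    omega
  -- the set of bad rows
  set R : Finset (Fin m) :=
    univ.filter (fun i => ∃ j, E i j = none ∧ M i j = true ∧ M' i j = false) with hRdef
  have hR : R = ∅ := by
    by_contra hne
    have hne' : R.Nonempty := nonempty_iff_ne_empty.mpr hne
    set i₀ := R.max' hne' with hi₀
    have hi₀R : i₀ ∈ R := R.max'_mem hne'
    obtain ⟨j₀, hj₀E, hj₀M, hj₀M'⟩ := (mem_filter.mp hi₀R).2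
    -- row i₀ : find j₁ free with M' = true, M = false
    obtain ⟨j₁, hj₁A, hj₁B⟩ := exists_mem_sdiff_of_card_eq (hrow i₀)
      (x := j₀) (by simp [hj₀M, hj₀E]) (by simp [hj₀M', hj₀E])
    simp only [mem_filter, mem_univ, true_and, not_and] at hj₁A hj₁B
    obtain ⟨hj₁M', hj₁E⟩ := hj₁A
    have hj₁M : M i₀ j₁ = false := by
      rcases Bool.eq_false_or_eq_true (M i₀ j₁) with h | h
      · exact absurd hj₁E (hj₁B h)
      · exact h
    have hj₁f : f i₀ ≤ (j₁ : ℕ) := by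
      by_contra hlt
      push_neg at hlt
      have := hb i₀ j₁ hj₁E hlt
      simp [this] at hj₁M
    -- column j₁ : find i₁ free with M = true, M' = false
    obtain ⟨i₁, hi₁A, hi₁B⟩ := exists_mem_sdiff_of_card_eq (hcol j₁).symm
      (x := i₀) (by simp [hj₁M', hj₁E]) (by simp [hj₁M, hj₁E])
    simp only [mem_filter, mem_univ, true_and, not_and] at hi₁A hi₁B
    obtain ⟨hi₁M, hi₁E⟩ := hi₁A
    have hi₁M' : M' i₁ j₁ = false := by
      rcases Bool.eq_false_or_eq_true (M' i₁ j₁) with h | h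
      · exact absurd hi₁E (hi₁B h)
      · exact h
    have hi₁f : (j₁ : ℕ) < f i₁ := by
      by_contra hle
      push_neg at hle
      have := ha i₁ j₁ hi₁E hle
      simp [this] at hi₁M
    have hi₁R : i₁ ∈ R := by
      simp only [hRdef, mem_filter, mem_univ, true_and]
      exact ⟨j₁, hi₁E, hi₁M, hi₁M'⟩
    have hle : i₁ ≤ i₀ := R.le_max' i₁ hi₁R
    have : f i₁ ≤ f i₀ := hf hle
    omega
  -- conclude M' = M
  funext i j
  by_cases hE : (E i j).isSome
  · exact hagree i j hE
  · have hEn : E i j = none := Option.not_isSome_iff_eq_none.mp hE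
    have hsub : (univ.filter fun j' => M i j' = true ∧ E i j' = none)
        ⊆ (univ.filter fun j' => M' i j' = true ∧ E i j' = none) := by
      intro j' hj'
      simp only [mem_filter, mem_univ, true_and] at hj' ⊢
      refine ⟨?_, hj'.2⟩
      rcases Bool.eq_false_or_eq_true (M' i j') with h | h
      · exact h
      · exfalso
        have hiR : i ∈ R := by
          simp only [hRdef, mem_filter, mem_univ, true_and]
          exact ⟨j', hj'.2, hj'.1, h⟩
        rw [hR] at hiR
        exact absurd hiR (notMem_empty i)
    have heq : (univ.filter fun j' => M i j' = true ∧ E i j' = none)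
        = (univ.filter fun j' => M' i j' = true ∧ E i j' = none) :=
      Finset.eq_of_subset_of_card_le hsub (hrow i).le
    rcases Bool.eq_false_or_eq_true (M' i j) with h | h
    · rcases Bool.eq_false_or_eq_true (M i j) with h2 | h2
      · rw [h, h2]
      · exfalso
        have hmem : j ∈ (univ.filter fun j' => M' i j' = true ∧ E i j' = none) := by
          simp [h, hEn]
        rw [← heq] at hmem
        simp [h2] at hmem
    · rcases Bool.eq_false_or_eq_true (M i j) with h2 | h2
      · exfalso
        have hmem : j ∈ (univ.filter fun j' => M i j' = true ∧ E i j' = none) := by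
          simp [h2, hEn]
        rw [heq] at hmem
        simp [h] at hmem
      · rw [h, h2]

/-- a minimal (critical) defining set `D`, with `M ∖ D` in good form along a
South-East walk given by a monotone threshold function `f`, must contain every zero of `M`
below the walk and every one of `M` above the walk, and `|D| = α₁ + β₀`. -/
theorem minimal_defining_set_structure {m n : ℕ} (s : Fin m → ℕ) (t : Fin n → ℕ)
    (D : Fin m → Fin n → Option Bool) (M : Fin m → Fin n → Bool)
    (f : Fin m → ℕ) (hf : Monotone f) (hfn : ∀ i, f i ≤ n)
    (hcrit : IsCriticalSet s t D M)
    (hbelow : ∀ i (j : Fin n) b, (j : ℕ) < f i → matMinus M D i j = some b → b = true)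
    (habove : ∀ i (j : Fin n) b, f i ≤ (j : ℕ) → matMinus M D i j = some b → b = false) :
    (∀ i (j : Fin n), (j : ℕ) < f i → M i j = false → D i j = some false) ∧
    (∀ i (j : Fin n), f i ≤ (j : ℕ) → M i j = true → D i j = some true) ∧
    psize D =
      ((Finset.univ.filter fun p : Fin m × Fin n =>
          f p.1 ≤ (p.2 : ℕ) ∧ M p.1 p.2 = true).card) +
      ((Finset.univ.filter fun p : Fin m × Fin n =>
          (p.2 : ℕ) < f p.1 ∧ M p.1 p.2 = false).card) := by
  classical
  obtain ⟨⟨hclass, hcont, _⟩, hmin⟩ := hcrit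
  have part1 : ∀ i (j : Fin n), (j : ℕ) < f i → M i j = false → D i j = some false := by
    intro i j hj hM0
    by_cases hsome : (D i j).isSome
    · obtain ⟨b, hbe⟩ := Option.isSome_iff_exists.mp hsome
      have hMb := hcont i j b hbe
      rw [hbe, hMb.symm.trans hM0]
    · have hn : D i j = none := Option.not_isSome_iff_eq_none.mp hsome
      have hmm : matMinus M D i j = some (M i j) := by simp [matMinus, hn]
      have := hbelow i j (M i j) hj hmm
      rw [hM0] at this
      exact absurd this (by simp)
  have part2 : ∀ i (j : Fin n), f i ≤ (j : ℕ) → M i j = true → D i j = some true := by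
    intro i j hj hM1
    by_cases hsome : (D i j).isSome
    · obtain ⟨b, hbe⟩ := Option.isSome_iff_exists.mp hsome
      have hMb := hcont i j b hbe
      rw [hbe, hMb.symm.trans hM1]
    · have hn : D i j = none := Option.not_isSome_iff_eq_none.mp hsome
      have hmm : matMinus M D i j = some (M i j) := by simp [matMinus, hn]
      have := habove i j (M i j) hj hmm
      rw [hM1] at this
      exact absurd this (by simp)
  have hmem : ∀ i (j : Fin n), (D i j).isSome →
      (f i ≤ (j : ℕ) ∧ M i j = true) ∨ ((j : ℕ) < f i ∧ M i j = false) := by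
    intro i j hsome
    by_contra hc
    push_neg at hc
    apply hmin i j hsome
    refine ⟨hclass, ?_, ?_⟩
    · intro i' j' b hbe
      unfold removeCell at hbe
      by_cases hij : i' = i ∧ j' = j
      · simp [hij] at hbe
      · rw [if_neg hij] at hbe
        exact hcont i' j' b hbe
    · intro M' hM'c hM'cont
      apply forced s t f hf (removeCell D i j) M M' hclass hM'c
      · intro i' j' hs
        obtain ⟨b, hbe⟩ := Option.isSome_iff_exists.mp hs
        have h1 := hM'cont i' j' b hbe
        have h2 : D i' j' = some b := by
          unfold removeCell at hbe
          by_cases hij : i' = i ∧ j' = j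
          · simp [hij] at hbe
          · rwa [if_neg hij] at hbe
        rw [h1, hcont i' j' b h2]
      · intro i' j' hE hlt
        unfold removeCell at hE
        by_cases hij : i' = i ∧ j' = j
        · obtain ⟨e1, e2⟩ := hij
          subst e1; subst e2
          rcases Bool.eq_false_or_eq_true (M i' j') with h | h
          · exact h
          · exact absurd h (hc.2 hlt)
        · rw [if_neg hij] at hE
          have hmm : matMinus M D i' j' = some (M i' j') := by simp [matMinus, hE]
          exact (hbelow i' j' (M i' j') hlt hmm)
      · intro i' j' hE hle
        unfold removeCell at hE
        by_cases hij : i' = i ∧ j' = j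
        · obtain ⟨e1, e2⟩ := hij
          subst e1; subst e2
          rcases Bool.eq_false_or_eq_true (M i' j') with h | h
          · exact absurd h (hc.1 hle)
          · exact h
        · rw [if_neg hij] at hE
          have hmm : matMinus M D i' j' = some (M i' j') := by simp [matMinus, hE]
          exact (habove i' j' (M i' j') hle hmm)
  refine ⟨part1, part2, ?_⟩
  have hset : (univ.filter fun p : Fin m × Fin n => (D p.1 p.2).isSome)
      = (univ.filter fun p : Fin m × Fin n =>
          (f p.1 ≤ (p.2 : ℕ) ∧ M p.1 p.2 = true) ∨ ((p.2 : ℕ) < f p.1 ∧ M p.1 p.2 = false)) := by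
    ext p
    simp only [mem_filter, mem_univ, true_and]
    constructor
    · exact hmem p.1 p.2
    · rintro (⟨h1, h2⟩ | ⟨h1, h2⟩)
      · rw [part2 p.1 p.2 h1 h2]; rfl
      · rw [part1 p.1 p.2 h1 h2]; rfl
  have hdisj : Disjoint
      (univ.filter fun p : Fin m × Fin n => f p.1 ≤ (p.2 : ℕ) ∧ M p.1 p.2 = true)
      (univ.filter fun p : Fin m × Fin n => (p.2 : ℕ) < f p.1 ∧ M p.1 p.2 = false) := by
    rw [Finset.disjoint_left]
    intro p hp hq
    simp only [mem_filter, mem_univ, true_and] at hp hq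
    omega
  unfold psize
  rw [hset, filter_or, Finset.card_union_of_disjoint hdisj]
end
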